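/- arXiv:2107.12252 — 9 statements merged into one kernel-verified Lean document; each statement's English description precedes it below -/
import Mathlib

section
/- Let G be a finite subgroup of GL(n,F) all of whose elements are monomial matrices, and suppose the permutation part φ(G) is transitive on {1,…,n}. Then there exists a monomial matrix b in GL(n,F) such that every element of b⁻¹Gb is a monomial matrix all of whose nonzero entries are roots of unity in F. -/
/-- `σ` is the permutation part of the monomial matrix `g`:
there are nonzero scalars `d j` with `g i j = d j` when `i = σ j` and `0` otherwise. -/
def HasPermPart {m : Type*} [DecidableEq m] {F : Type*} [Field F]
    (g : Matrix m m F) (σ : Equiv.Perm m) : Prop :=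
  ∃ d : m → Fˣ, ∀ i j, g i j = if i = σ j then (d j : F) else 0

/-- A matrix is monomial if it has a permutation part. -/
def IsMonomial {m : Type*} [DecidableEq m] {F : Type*} [Field F]
    (g : Matrix m m F) : Prop :=
  ∃ σ : Equiv.Perm m, HasPermPart g σ

/-- A matrix is monomial with all nonzero entries roots of unity (elements
of `Fˣ` of finite multiplicative order). -/
def IsMonomialRootsOfUnity {m : Type*} [DecidableEq m] {F : Type*} [Field F]
    (g : Matrix m m F) : Prop :=
  ∃ (σ : Equiv.Perm m) (d : m → Fˣ), (∀ j, IsOfFinOrder (d j)) ∧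
    ∀ i j, g i j = if i = σ j then (d j : F) else 0

section Aux

variable {m : Type*} [Fintype m] [DecidableEq m] {F : Type*} [Field F]

/-- Entries of a product of monomial matrices. -/
lemma monomial_mul_entry (A B : Matrix m m F) (σ τ : Equiv.Perm m) (dA dB : m → Fˣ)
    (hA : ∀ i j, A i j = if i = σ j then (dA j : F) else 0)
    (hB : ∀ i j, B i j = if i = τ j then (dB j : F) else 0) :
    ∀ i j, (A * B) i j = if i = σ (τ j) then ((dA (τ j) * dB j : Fˣ) : F) else 0 := by
  intro i j
  rw [Matrix.mul_apply, Finset.sum_eq_single (τ j)]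
  · rw [hA, hB]; simp [ite_mul]
  · intro k _ hk; rw [hB]; simp [hk]
  · intro hmem; exact absurd (Finset.mem_univ _) hmem

/-- Entries in a fixed column of powers of a monomial matrix whose permutation
part fixes that column index. -/
lemma monomial_pow_entry (H : Matrix m m F) (τ : Equiv.Perm m) (e : m → Fˣ)
    (hH : ∀ i j, H i j = if i = τ j then (e j : F) else 0)
    (x : m) (hx : τ x = x) :
    ∀ (k : ℕ) (i : m), (H ^ k) i x = if i = x then (e x : F) ^ k else 0 := by
  intro k
  induction k with
  | zero => intro i; simp [Matrix.one_apply]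
  | succ k ih =>
    intro i
    rw [pow_succ', Matrix.mul_apply, Finset.sum_eq_single x]
    · rw [hH, ih, hx]
      by_cases h : i = x <;> simp [h, pow_succ']
    · intro l _ hl; rw [ih]; simp [hl]
    · intro hmem; exact absurd (Finset.mem_univ _) hmem

/-- Entries of the inverse of a monomial unit. -/
lemma monomial_inv_entry (g : (Matrix m m F)ˣ) (σ : Equiv.Perm m) (d : m → Fˣ)
    (hg : ∀ i j, (g : Matrix m m F) i j = if i = σ j then (d j : F) else 0) :
    ∀ i j, ((g⁻¹ : (Matrix m m F)ˣ) : Matrix m m F) i j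
      = if i = σ⁻¹ j then (((d (σ⁻¹ j))⁻¹ : Fˣ) : F) else 0 := by
  set M : Matrix m m F := Matrix.of fun i j =>
    if i = σ⁻¹ j then (((d (σ⁻¹ j))⁻¹ : Fˣ) : F) else 0 with hMdef
  have hMe : ∀ i j, M i j = if i = σ⁻¹ j then (((d (σ⁻¹ j))⁻¹ : Fˣ) : F) else 0 :=
    fun i j => rfl
  have key : (g : Matrix m m F) * M = 1 := by
    ext i j
    rw [monomial_mul_entry _ _ σ σ⁻¹ d (fun j => (d (σ⁻¹ j))⁻¹) hg hMe, Matrix.one_apply]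
    simp
  have hinv : ((g⁻¹ : (Matrix m m F)ˣ) : Matrix m m F) = M := by
    calc ((g⁻¹ : (Matrix m m F)ˣ) : Matrix m m F)
        = ((g⁻¹ : (Matrix m m F)ˣ) : Matrix m m F) * ((g : Matrix m m F) * M) := by
          rw [key, mul_one]
      _ = (((g⁻¹ : (Matrix m m F)ˣ) : Matrix m m F) * (g : Matrix m m F)) * M := by
          rw [mul_assoc]
      _ = M := by rw [Units.inv_mul, one_mul]
  intro i j; rw [hinv]; exact hMe i j

end Aux

set_option maxHeartbeats 1000000 in
/-- A finite monomial subgroup of `GL(n,F)` with transitive permutation part is conjugate,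
by a monomial matrix, to a group of monomial matrices whose entries are roots of unity. -/
theorem finite_monomial_transitive_conjugate_to_rootsOfUnity_entries
    {n : ℕ} (hn : 1 ≤ n) {F : Type*} [Field F]
    (G : Subgroup (Matrix.GeneralLinearGroup (Fin n) F)) (hfin : Finite G)
    (hmono : ∀ g ∈ G, IsMonomial (g : Matrix (Fin n) (Fin n) F))
    (htrans : ∀ i j : Fin n, ∃ g ∈ G, ∃ σ : Equiv.Perm (Fin n),
      HasPermPart (g : Matrix (Fin n) (Fin n) F) σ ∧ σ i = j) :
    ∃ b : Matrix.GeneralLinearGroup (Fin n) F,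
      IsMonomial (b : Matrix (Fin n) (Fin n) F) ∧
      ∀ g ∈ G, IsMonomialRootsOfUnity
        ((b⁻¹ * g * b : Matrix.GeneralLinearGroup (Fin n) F) : Matrix (Fin n) (Fin n) F) := by
  classical
  haveI : NeZero n := ⟨by omega⟩
  -- choose, for each i, an element of G whose permutation part sends 0 to i
  have hchoice : ∀ i : Fin n, ∃ g : Matrix.GeneralLinearGroup (Fin n) F, g ∈ G ∧
      ∃ σ : Equiv.Perm (Fin n), ∃ d : Fin n → Fˣ,
        (∀ a b, (g : Matrix (Fin n) (Fin n) F) a b = if a = σ b then (d b : F) else 0)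
        ∧ σ 0 = i := by
    intro i
    obtain ⟨g, hg, σ, ⟨d, hd⟩, hσ⟩ := htrans 0 i
    exact ⟨g, hg, σ, d, hd, hσ⟩
  choose gi hgiG si di hgi hsi using hchoice
  set c : Fin n → Fˣ := fun i => di i 0 with hc
  -- the conjugating diagonal matrix
  set b : Matrix.GeneralLinearGroup (Fin n) F :=
    ⟨Matrix.diagonal (fun i => (c i : F)), Matrix.diagonal (fun i => ((c i)⁻¹ : Fˣ)),
      by rw [Matrix.diagonal_mul_diagonal]; simp,
      by rw [Matrix.diagonal_mul_diagonal]; simp⟩ with hb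
  refine ⟨b, ⟨1, c, fun i j => ?_⟩, ?_⟩
  · show Matrix.diagonal (fun i => (c i : F)) i j = _
    by_cases h : i = j <;> simp [Matrix.diagonal_apply, h]
  intro g hg
  obtain ⟨σ, d, hd⟩ := hmono g hg
  refine ⟨σ, fun j => (c (σ j))⁻¹ * d j * c j, fun j => ?_, fun i j => ?_⟩
  · -- each entry is a root of unity
    set h : Matrix.GeneralLinearGroup (Fin n) F := (gi (σ j))⁻¹ * (g * gi j) with hh
    have hmem : h ∈ G := mul_mem (inv_mem (hgiG _)) (mul_mem hg (hgiG _))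
    -- entries of h
    have hmul1 := monomial_mul_entry (g : Matrix (Fin n) (Fin n) F)
      (gi j : Matrix (Fin n) (Fin n) F) σ (si j) d (di j) hd (hgi j)
    have hinv := monomial_inv_entry (gi (σ j)) (si (σ j)) (di (σ j)) (hgi (σ j))
    have hmul2 := monomial_mul_entry
      (((gi (σ j))⁻¹ : Matrix.GeneralLinearGroup (Fin n) F) : Matrix (Fin n) (Fin n) F)
      ((g : Matrix (Fin n) (Fin n) F) * (gi j : Matrix (Fin n) (Fin n) F))
      (si (σ j))⁻¹ (σ * si j)
      (fun j' => (di (σ j) ((si (σ j))⁻¹ j'))⁻¹)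
      (fun j' => d (si j j') * di j j') hinv hmul1
    set τ : Equiv.Perm (Fin n) := (si (σ j))⁻¹ * (σ * si j) with hτ
    set e : Fin n → Fˣ := fun j' =>
      (di (σ j) ((si (σ j))⁻¹ ((σ * si j) j')))⁻¹ * (d (si j j') * di j j') with he
    have hhe : ∀ i' j', (h : Matrix (Fin n) (Fin n) F) i' j'
        = if i' = τ j' then (e j' : F) else 0 := by
      intro i' j'
      have : (h : Matrix (Fin n) (Fin n) F)
          = (((gi (σ j))⁻¹ : Matrix.GeneralLinearGroup (Fin n) F) : Matrix (Fin n) (Fin n) F)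
            * ((g : Matrix (Fin n) (Fin n) F) * (gi j : Matrix (Fin n) (Fin n) F)) := by
        rw [hh]; push_cast; ring
      rw [this, hmul2 i' j']
      rfl
    have h2 : (si (σ j))⁻¹ (σ j) = 0 := by
      have h3 := congrArg (fun x => (si (σ j))⁻¹ x) (hsi (σ j))
      simpa using h3.symm
    have hτ0 : τ 0 = 0 := by
      rw [hτ]
      simp only [Equiv.Perm.mul_apply, hsi j]
      exact h2
    -- h has finite order
    have hfo : IsOfFinOrder h := by
      have h1 : IsOfFinOrder (⟨h, hmem⟩ : G) := isOfFinOrder_of_finite _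
      exact MonoidHom.isOfFinOrder G.subtype h1
    obtain ⟨mo, hmo, hpow⟩ := isOfFinOrder_iff_pow_eq_one.mp hfo
    have hmat : ((h : Matrix (Fin n) (Fin n) F)) ^ mo = 1 := by
      have := congrArg (fun u : Matrix.GeneralLinearGroup (Fin n) F =>
        (u : Matrix (Fin n) (Fin n) F)) hpow
      simpa [Units.val_pow_eq_pow_val] using this
    have he1 : (e 0 : F) ^ mo = 1 := by
      have h1 := monomial_pow_entry (h : Matrix (Fin n) (Fin n) F) τ e hhe 0 hτ0 mo 0
      rw [hmat] at h1
      simpa [Matrix.one_apply] using h1.symm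
    have heu : (e 0) ^ mo = 1 := by
      ext
      push_cast
      exact he1
    have hfoe : IsOfFinOrder (e 0) := isOfFinOrder_iff_pow_eq_one.mpr ⟨mo, hmo, heu⟩
    have hee : e 0 = (c (σ j))⁻¹ * d j * c j := by
      rw [he]
      simp only [Equiv.Perm.mul_apply, hsi j, h2, hc]
      exact (mul_assoc _ _ _).symm
    show IsOfFinOrder ((c (σ j))⁻¹ * d j * c j)
    rw [← hee]
    exact hfoe
  · -- entries of the conjugated matrix
    have hval : ((b⁻¹ * g * b : Matrix.GeneralLinearGroup (Fin n) F)
        : Matrix (Fin n) (Fin n) F)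
        = (Matrix.diagonal (fun i => ((c i)⁻¹ : Fˣ)) : Matrix (Fin n) (Fin n) F)
          * (g : Matrix (Fin n) (Fin n) F) * Matrix.diagonal (fun i => (c i : F)) := rfl
    rw [hval, Matrix.mul_diagonal, Matrix.diagonal_mul, hd]
    by_cases h : i = σ j <;> simp [h]
end

section
/- Let p be a prime and let T be a solvable transitive subgroup of the symmetric group on a set of size p. Then there exists σ in T of order p such that the cyclic subgroup ⟨σ⟩ is normal in T, and the quotient T/⟨σ⟩ is cyclic of order dividing p−1. -/
/-!
The last nontrivial term `N` of the derived series of `T` is an abelian normal subgroup. An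
action on a prime number of points is primitive, so `N` is transitive; hence `p` divides `|N|`
and `N` contains an element `σ` of order `p`, which is a `p`-cycle. A permutation commuting with
a `p`-cycle is one of its powers, so `⟨σ⟩` is its own centralizer in `T` and contains the
abelian group `N`, whence `N = ⟨σ⟩`. Conjugation then embeds `T/⟨σ⟩ = T/C_T(σ)` into
`Aut ⟨σ⟩ ≅ (ℤ/p)ˣ`, which is cyclic of order `p - 1`.
-/

open Equiv Subgroup

theorem Equiv.Perm.mem_zpowers_of_commute_of_sameCycle {X : Type*} {f g : Perm X} {x : X}
    (hg : ∀ y, g.SameCycle x y) (hfg : Commute f g) : f ∈ zpowers g := by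
  obtain ⟨i, hi⟩ := hg (f x)
  refine ⟨i, Equiv.ext fun y ↦ ?_⟩
  obtain ⟨j, rfl⟩ := hg y
  calc (g ^ i) ((g ^ j) x) = (g ^ j) ((g ^ i) x) := by
        rw [← Perm.mul_apply, ← Perm.mul_apply, zpow_mul_comm]
    _ = f ((g ^ j) x) := by rw [hi, ← Perm.mul_apply, ← Perm.mul_apply, (hfg.zpow_right j).eq]

theorem Equiv.Perm.sameCycle_of_orderOf_eq_card {X : Type*} [Fintype X] {g : Perm X}
    (hX : (Fintype.card X).Prime) (hg : orderOf g = Fintype.card X) (x y : X) :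
    g.SameCycle x y := by
  classical
  have hcycle : g.IsCycle := Perm.isCycle_of_prime_order'' hX hg
  have hsupport : g.support = Finset.univ :=
    Finset.eq_univ_of_card _ (hcycle.orderOf ▸ hg)
  have hmoves (z : X) : g z ≠ z := Perm.mem_support.mp (hsupport ▸ Finset.mem_univ z)
  exact hcycle.sameCycle (hmoves x) (hmoves y)

theorem Subgroup.centralizer_zpowers_eq_of_sameCycle {X : Type*} {T : Subgroup (Perm X)}
    {σ : T} {x : X} (hσ : ∀ y, (σ : Perm X).SameCycle x y) :
    centralizer (zpowers σ : Set T) = zpowers σ := by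
  refine le_antisymm (fun τ hτ ↦ ?_) (le_centralizer _)
  have hcomm : Commute (τ : Perm X) σ :=
    congrArg Subtype.val (mem_centralizer_iff.mp hτ σ (mem_zpowers σ)).symm
  obtain ⟨i, hi⟩ := Perm.mem_zpowers_of_commute_of_sameCycle hσ hcomm
  exact ⟨i, Subtype.ext (by simpa using hi)⟩

theorem Group.IsSolvable.exists_normal_ne_bot_le_centralizer {G : Type*} [Group G]
    [Group.IsSolvable G] [Nontrivial G] :
    ∃ N : Subgroup G, N.Normal ∧ N ≠ ⊥ ∧ N ≤ centralizer N := by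
  classical
  have hsolv : ∃ n, derivedSeries G n = ⊥ := IsSolvable.solvable
  obtain ⟨m, hm⟩ : ∃ m, Nat.find hsolv = m + 1 := Nat.exists_eq_succ_of_ne_zero
    fun h0 ↦ top_ne_bot (h0 ▸ Nat.find_spec hsolv)
  refine ⟨derivedSeries G m, derivedSeries_normal G m, Nat.find_min hsolv (by omega), ?_⟩
  rw [← commutator_eq_bot_iff_le_centralizer, ← derivedSeries_succ, ← hm]
  exact Nat.find_spec hsolv

theorem MulAction.fixedPoints_ne_univ_of_ne_bot {G X : Type*} [Group G] [MulAction G X]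
    [FaithfulSMul G X] {N : Subgroup G} (hN : N ≠ ⊥) : fixedPoints N X ≠ Set.univ := by
  obtain ⟨a, ha⟩ := N.ne_bot_iff_exists_ne_one.mp hN
  refine fun hfix ↦ ha (eq_of_smul_eq_smul fun x : X ↦ ?_)
  rw [one_smul]
  exact (hfix ▸ Set.mem_univ x : x ∈ fixedPoints N X) a

theorem MulAut.ker_conjNormal {G : Type*} [Group G] (H : Subgroup G) [H.Normal] :
    (MulAut.conjNormal : G →* MulAut H).ker = centralizer H := by
  ext g
  simp [MulEquiv.ext_iff, Subtype.ext_iff, mem_centralizer_iff, eq_mul_inv_iff_mul_eq, eq_comm]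

theorem Subgroup.exists_injective_quotient_mulAut {G : Type*} [Group G] {H : Subgroup G}
    [H.Normal] (hH : centralizer (H : Set G) = H) :
    ∃ f : G ⧸ H →* MulAut H, Function.Injective f := by
  have hker : (MulAut.conjNormal : G →* MulAut H).ker = H := (MulAut.ker_conjNormal H).trans hH
  let φ : G →* MulAut H := MulAut.conjNormal
  let e : G ⧸ H ≃* G ⧸ φ.ker := QuotientGroup.quotientMulEquivOfEq hker.symm
  exact ⟨(QuotientGroup.kerLift φ).comp e.toMonoidHom,
    (QuotientGroup.kerLift_injective φ).comp e.injective⟩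

theorem isCyclic_mulAut_and_card_eq_of_prime_card {G : Type*} [Group G] (hG : (Nat.card G).Prime) :
    IsCyclic (MulAut G) ∧ Nat.card (MulAut G) = Nat.card G - 1 := by
  have : Fact (Nat.card G).Prime := ⟨hG⟩
  have : IsCyclic G := isCyclic_of_prime_card rfl
  have : Finite G := Nat.finite_of_card_ne_zero hG.ne_zero
  exact ⟨isCyclic_of_injective (IsCyclic.mulAutMulEquiv G).toMonoidHom (MulEquiv.injective _),
    by rw [IsCyclic.card_mulAut, Nat.totient_prime hG]⟩

theorem MulAction.IsPretransitive.nontrivial (G X : Type*) [Group G] [MulAction G X]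
    [IsPretransitive G X] [Nontrivial X] : Nontrivial G := by
  obtain ⟨x, y, hxy⟩ := exists_pair_ne X
  obtain ⟨g, rfl⟩ := MulAction.exists_smul_eq G x y
  exact ⟨⟨g, 1, fun h ↦ hxy (by rw [h, one_smul])⟩⟩

theorem MulAction.card_dvd_card_of_isPretransitive (G X : Type*) [Group G] [MulAction G X]
    [IsPretransitive G X] [Nonempty X] : Nat.card X ∣ Nat.card G := by
  obtain ⟨x⟩ := ‹Nonempty X›
  exact index_stabilizer_of_transitive G x ▸ (stabilizer G x).index_dvd_card

/-- A solvable transitive subgroup `T` of the symmetric group on a set of prime size `p`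
contains an element `σ` of order `p` such that `⟨σ⟩` is normal in `T` and `T/⟨σ⟩` is
cyclic of order dividing `p - 1`. -/
theorem solvable_transitive_prime_degree_structure
    {p : ℕ} (hp : p.Prime) {X : Type*} [Fintype X] (hX : Fintype.card X = p)
    (T : Subgroup (Equiv.Perm X)) (hsolv : IsSolvable T)
    (htrans : ∀ x y : X, ∃ σ ∈ T, σ x = y) :
    ∃ σ : T, orderOf σ = p ∧ (Subgroup.zpowers σ).Normal ∧
      (∀ [_h : (Subgroup.zpowers σ).Normal], IsCyclic (T ⧸ Subgroup.zpowers σ)) ∧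
      Nat.card (T ⧸ Subgroup.zpowers σ) ∣ p - 1 := by
  have : Fact p.Prime := ⟨hp⟩
  have hcard : Nat.card X = p := Nat.card_eq_fintype_card.trans hX
  have : Nontrivial X := Fintype.one_lt_card_iff_nontrivial.mp (hX ▸ hp.one_lt)
  have : MulAction.IsPretransitive T X :=
    ⟨fun x y ↦ (htrans x y).elim fun σ ⟨hσ, hσxy⟩ ↦ ⟨⟨σ, hσ⟩, hσxy⟩⟩
  have : MulAction.IsPreprimitive T X := .of_prime_card (hcard ▸ hp)
  have : Nontrivial T := MulAction.IsPretransitive.nontrivial T X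
  have : Group.IsSolvable T := hsolv
  obtain ⟨N, hN, hNbot, hNcomm⟩ := Group.IsSolvable.exists_normal_ne_bot_le_centralizer (G := T)
  have : MulAction.IsPretransitive N X := MulAction.IsQuasiPreprimitive.isPretransitive_of_normal
    (MulAction.fixedPoints_ne_univ_of_ne_bot hNbot)
  obtain ⟨σ, hσ⟩ := exists_prime_orderOf_dvd_card' (G := N) p
    (hcard ▸ MulAction.card_dvd_card_of_isPretransitive N X)
  have hσT : orderOf (σ : T) = p := by rwa [orderOf_submonoid]
  obtain ⟨x⟩ : Nonempty X := inferInstance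
  have hcent : centralizer (zpowers (σ : T) : Set T) = zpowers (σ : T) :=
    centralizer_zpowers_eq_of_sameCycle fun y ↦
      Perm.sameCycle_of_orderOf_eq_card (hX ▸ hp) (by rwa [orderOf_submonoid, hX]) x y
  have hNσ : N = zpowers (σ : T) :=
    le_antisymm (hNcomm.trans (hcent ▸ centralizer_le (zpowers_le.mpr σ.2)))
      (zpowers_le.mpr σ.2)
  have : (zpowers (σ : T)).Normal := hNσ ▸ hN
  obtain ⟨f, hf⟩ := exists_injective_quotient_mulAut hcent
  obtain ⟨_, hcardAut⟩ := isCyclic_mulAut_and_card_eq_of_prime_card (G := zpowers (σ : T))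
    (by rwa [Nat.card_zpowers, hσT])
  refine ⟨σ, hσT, this, isCyclic_of_injective f hf, ?_⟩
  rw [Nat.card_zpowers, hσT] at hcardAut
  exact hcardAut ▸ card_dvd_of_injective f hf
end

section
/- Let p be a prime, let T be a transitive subgroup of the symmetric group on a set X of size p, and let N be a nontrivial normal subgroup of T. Then N acts transitively on X. -/
/-- A nontrivial normal subgroup of a transitive subgroup of the symmetric group
on a set of prime size acts transitively. -/
theorem normal_subgroup_of_transitive_prime_degree_is_transitive
    {p : ℕ} (hp : p.Prime) {X : Type*} [Fintype X] (hX : Fintype.card X = p)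
    (T : Subgroup (Equiv.Perm X)) (htrans : ∀ x y : X, ∃ σ ∈ T, σ x = y)
    (N : Subgroup T) (hN : N.Normal) (hnontriv : N ≠ ⊥) :
    ∀ x y : X, ∃ n : N, ((n : T) : Equiv.Perm X) x = y := by
  classical
  have hcard : Nat.card X = p := by simp [Nat.card_eq_fintype_card, hX]
  -- T acts pretransitively on X
  have hpre : MulAction.IsPretransitive T X := by
    constructor
    intro x y
    obtain ⟨σ, hσ, h⟩ := htrans x y
    exact ⟨⟨σ, hσ⟩, h⟩
  -- pick a nontrivial element of N
  obtain ⟨n₀, hn₀N, hn₀⟩ := (Subgroup.bot_or_exists_ne_one N).resolve_left hnontriv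
  have : ((n₀ : T) : Equiv.Perm X) ≠ 1 := by
    intro h
    apply hn₀
    ext1
    ext1
    rw [h]
    rfl
  obtain ⟨x₀, hx₀⟩ : ∃ x : X, ((n₀ : T) : Equiv.Perm X) x ≠ x := by
    by_contra h
    push_neg at h
    exact this (Equiv.ext h)
  -- the orbit of x₀ under N is a block of T with at least 2 elements
  haveI := hN
  have hblock := MulAction.IsBlock.orbit_of_normal (G := T) (X := X) (N := N) x₀
  have hmem : x₀ ∈ MulAction.orbit N x₀ := MulAction.mem_orbit_self x₀
  have hmem2 : ((n₀ : T) : Equiv.Perm X) x₀ ∈ MulAction.orbit N x₀ :=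
    ⟨⟨n₀, hn₀N⟩, rfl⟩
  have hdvd := hblock.ncard_dvd_card ⟨x₀, hmem⟩
  rw [hcard] at hdvd
  have h2 : 2 ≤ (MulAction.orbit N x₀).ncard := by
    have hfin : (MulAction.orbit N x₀).Finite := Set.toFinite _
    exact (Set.one_lt_ncard_iff hfin).mpr ⟨_, x₀, hmem2, hmem, hx₀⟩
  have hone : (MulAction.orbit N x₀).ncard = p := by
    rcases (Nat.Prime.eq_one_or_self_of_dvd hp _ hdvd) with h | h
    · omega
    · exact h
  have huniv : MulAction.orbit N x₀ = Set.univ := by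
    apply Set.eq_of_subset_of_ncard_le (Set.subset_univ _)
    rw [Set.ncard_univ, hcard, hone]
  -- conclude transitivity
  intro x y
  have hx : x ∈ MulAction.orbit N x₀ := huniv ▸ Set.mem_univ x
  have hy : y ∈ MulAction.orbit N x₀ := huniv ▸ Set.mem_univ y
  obtain ⟨a, ha⟩ := hx
  obtain ⟨b, hb⟩ := hy
  simp only at ha hb
  refine ⟨b * a⁻¹, ?_⟩
  have h : (b * a⁻¹) • x = y := by rw [mul_smul, ← ha, inv_smul_smul, hb]
  exact h
end

section
/- Let p be a prime and let T be a transitive subgroup of the symmetric group on a set of size p. Then: (a) every nontrivial nilpotent normal subgroup of T has order exactly p; and (b) T possesses a nontrivial nilpotent normal subgroup if and only if T is solvable. -/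
/-!
A nontrivial normal subgroup `N` of a transitive group of prime degree is again transitive: its
orbits form a block system, and blocks have size dividing `p`. If `N` is nilpotent, its centre
gives a nontrivial normal subgroup `Z = N ⊓ centralizer N`, which is then transitive and abelian.
A transitive abelian permutation group is regular and is its own centralizer, so
`N ≤ centralizer Z = Z`: thus `N` is abelian, regular of order `p`, and `centralizer N = N`.
Conjugation then embeds `T ⧸ N` into `MulAut N ≃* (ZMod p)ˣ`, so `T` is solvable. Conversely, the
last nontrivial term of the derived series of a solvable group is a nontrivial abelian normal
subgroup.
-/

open MulAction Subgroup

section FaithfulAction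

variable {G X : Type*} [Group G] [MulAction G X] [FaithfulSMul G X]

theorem eq_one_of_mem_centralizer_of_smul_eq_self {A : Subgroup G} [IsPretransitive A X]
    {g : G} (hg : g ∈ centralizer A) {x : X} (hx : g • x = x) : g = 1 := by
  refine eq_of_smul_eq_smul (α := X) fun y ↦ ?_
  obtain ⟨a, rfl⟩ := exists_smul_eq A x y
  rw [one_smul, Subgroup.smul_def, ← mul_smul, (mem_centralizer_iff.mp hg a a.2).symm, mul_smul,
    hx]

theorem card_eq_card_of_le_centralizer [Nonempty X] {A : Subgroup G} [IsPretransitive A X]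
    (hA : A ≤ centralizer A) : Nat.card A = Nat.card X := by
  obtain ⟨x⟩ := ‹Nonempty X›
  refine Nat.card_congr <|
    Equiv.ofBijective (fun a : A ↦ a • x) ⟨fun a b hab ↦ ?_, exists_smul_eq A x⟩
  have hfix : ((b⁻¹ * a : A) : G) • x = x := by
    rw [← Subgroup.smul_def, mul_smul, show a • x = b • x from hab, inv_smul_smul]
  have hone := eq_one_of_mem_centralizer_of_smul_eq_self (hA (b⁻¹ * a).2) hfix
  exact (inv_mul_eq_one.mp (Subtype.ext hone)).symm

theorem centralizer_eq_of_le_centralizer [Nonempty X] {A : Subgroup G} [IsPretransitive A X]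
    (hA : A ≤ centralizer A) : centralizer A = A := by
  refine le_antisymm (fun g hg ↦ ?_) hA
  obtain ⟨x⟩ := ‹Nonempty X›
  obtain ⟨a, ha⟩ := exists_smul_eq A x (g • x)
  have hfix : ((a : G)⁻¹ * g) • x = x := by
    rw [mul_smul, ← ha, Subgroup.smul_def, inv_smul_smul]
  have hone := eq_one_of_mem_centralizer_of_smul_eq_self (mul_mem (inv_mem (hA a.2)) hg) hfix
  exact inv_mul_eq_one.mp hone ▸ a.2

theorem isPretransitive_of_normal_of_prime_card [IsPretransitive G X] (hp : (Nat.card X).Prime)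
    {N : Subgroup G} [N.Normal] (hN : N ≠ ⊥) : IsPretransitive N X := by
  have := IsPreprimitive.of_prime_card (G := G) hp
  refine IsQuasiPreprimitive.isPretransitive_of_normal fun hfix ↦ hN ?_
  refine (eq_bot_iff_forall N).mpr fun n hn ↦ eq_of_smul_eq_smul (α := X) fun x ↦ ?_
  rw [one_smul]
  exact mem_fixedPoints.mp (hfix ▸ Set.mem_univ x) ⟨n, hn⟩

theorem inf_centralizer_ne_bot_of_isNilpotent {N : Subgroup G} [Group.IsNilpotent N]
    (hN : N ≠ ⊥) : N ⊓ centralizer N ≠ ⊥ := by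
  have : Nontrivial N := (nontrivial_iff_ne_bot N).mpr hN
  obtain ⟨⟨z, hz⟩, hz1⟩ := ne_bot_iff_exists_ne_one.mp (Group.IsNilpotent.center_ne_bot (G := N))
  refine ne_bot_iff_exists_ne_one.mpr ⟨⟨z, z.2, fun n hn ↦ ?_⟩, fun h ↦ hz1 ?_⟩
  · exact congrArg Subtype.val (mem_center_iff.mp hz ⟨n, hn⟩)
  · have : (z : G) = 1 := congrArg Subtype.val h
    exact Subtype.ext (Subtype.ext this)

theorem centralizer_eq_self_of_isNilpotent_of_prime_card [IsPretransitive G X]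
    (hp : (Nat.card X).Prime) {N : Subgroup G} [N.Normal] [Group.IsNilpotent N] (hN : N ≠ ⊥) :
    centralizer N = N := by
  have : Nonempty X := (Nat.card_pos_iff.mp hp.pos).1
  set Z := N ⊓ centralizer N
  have := isPretransitive_of_normal_of_prime_card hp (inf_centralizer_ne_bot_of_isNilpotent hN)
  have hZ : Z ≤ centralizer Z := fun z hz ↦ centralizer_le inf_le_left hz.2
  have hNZ : N ≤ Z :=
    (le_centralizer_iff.mp inf_le_right).trans (centralizer_eq_of_le_centralizer (X := X) hZ).le
  have := isPretransitive_of_normal_of_prime_card hp hN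
  exact centralizer_eq_of_le_centralizer (X := X) (hNZ.trans inf_le_right)

theorem card_eq_card_of_isNilpotent_of_prime_card [IsPretransitive G X]
    (hp : (Nat.card X).Prime) {N : Subgroup G} [N.Normal] [Group.IsNilpotent N] (hN : N ≠ ⊥) :
    Nat.card N = Nat.card X := by
  have : Nonempty X := (Nat.card_pos_iff.mp hp.pos).1
  have := isPretransitive_of_normal_of_prime_card hp hN
  exact card_eq_card_of_le_centralizer
    (centralizer_eq_self_of_isNilpotent_of_prime_card (X := X) hp hN).ge

end FaithfulAction

theorem nontrivial_of_isPretransitive {G X : Type*} [Group G] [MulAction G X]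
    [IsPretransitive G X] [Nontrivial X] : Nontrivial G := by
  obtain ⟨x, y, hxy⟩ := exists_pair_ne X
  obtain ⟨g, rfl⟩ := exists_smul_eq G x y
  exact nontrivial_of_ne g 1 fun h ↦ hxy (by rw [h, one_smul])

section Solvable

variable {G : Type*} [Group G]

theorem Group.IsNilpotent.of_isMulCommutative [IsMulCommutative G] : Group.IsNilpotent G :=
  ⟨1, upperCentralSeries_one_eq_top_iff.mpr ‹_›⟩

theorem isSolvable_of_isCyclic_of_centralizer_le {N : Subgroup G} [N.Normal] [IsCyclic N]
    (hN : centralizer N ≤ N) : Group.IsSolvable G := by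
  let := IsCyclic.commGroup (α := N)
  have : Group.IsSolvable (MulAut N) :=
    Group.isSolvable_of_isSolvable_injective (f := (IsCyclic.mulAutMulEquiv N).toMonoidHom)
      (IsCyclic.mulAutMulEquiv N).injective
  refine Group.isSolvable_of_ker_le_range N.subtype (MulAut.conjNormal (H := N))
    fun g hg ↦ ⟨⟨g, hN (mem_centralizer_iff.mpr fun n hn ↦ ?_)⟩, rfl⟩
  have : g * n * g⁻¹ = n := by
    rw [← MulAut.conjNormal_apply g ⟨n, hn⟩, hg]
    rfl
  exact (mul_inv_eq_iff_eq_mul.mp this).symm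

theorem Group.IsSolvable.exists_normal_isMulCommutative_ne_bot [Group.IsSolvable G]
    [Nontrivial G] : ∃ A : Subgroup G, A.Normal ∧ IsMulCommutative A ∧ A ≠ ⊥ := by
  classical
  have hex : ∃ n, derivedSeries G (n + 1) = ⊥ := by
    obtain ⟨n, hn⟩ := Group.IsSolvable.solvable (G := G)
    exact ⟨n, eq_bot_iff.mpr (hn ▸ derivedSeries_antitone G n.le_succ)⟩
  refine ⟨derivedSeries G (Nat.find hex), derivedSeries_normal G _, ?_, ?_⟩
  · rw [← le_centralizer_iff_isMulCommutative, ← commutator_eq_bot_iff_le_centralizer,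
      ← derivedSeries_succ]
    exact Nat.find_spec hex
  · cases h : Nat.find hex with
    | zero => exact derivedSeries_zero G ▸ top_ne_bot
    | succ m => exact Nat.find_min hex (h ▸ m.lt_succ_self)

end Solvable

/-- For a transitive subgroup `T` of the symmetric group on a set of prime size `p`:
(a) every nontrivial nilpotent normal subgroup of `T` has order exactly `p`; and
(b) `T` has a nontrivial nilpotent normal subgroup if and only if `T` is solvable. -/
theorem fitting_subgroup_of_transitive_prime_degree
    {p : ℕ} (hp : p.Prime) {X : Type*} [Fintype X] (hX : Fintype.card X = p)
    (T : Subgroup (Equiv.Perm X)) (htrans : ∀ x y : X, ∃ σ ∈ T, σ x = y) :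
    (∀ N : Subgroup T, N.Normal → Group.IsNilpotent N → N ≠ ⊥ → Nat.card N = p) ∧
    ((∃ N : Subgroup T, N.Normal ∧ Group.IsNilpotent N ∧ N ≠ ⊥) ↔ IsSolvable T) := by
  have : IsPretransitive T X := ⟨fun x y ↦ let ⟨σ, hσ, h⟩ := htrans x y; ⟨⟨σ, hσ⟩, h⟩⟩
  have hpX : (Nat.card X).Prime := by rwa [Nat.card_eq_fintype_card, hX]
  have hcard (N : Subgroup T) (_ : N.Normal) (_ : Group.IsNilpotent N) (hN : N ≠ ⊥) :
      Nat.card N = p := by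
    rw [card_eq_card_of_isNilpotent_of_prime_card hpX hN, Nat.card_eq_fintype_card, hX]
  refine ⟨hcard, fun ⟨N, hNormal, hNil, hN⟩ ↦ ?_, fun hT ↦ ?_⟩
  · have : Fact p.Prime := ⟨hp⟩
    have : IsCyclic N := isCyclic_of_prime_card (hcard N hNormal hNil hN)
    exact isSolvable_of_isCyclic_of_centralizer_le
      (centralizer_eq_self_of_isNilpotent_of_prime_card hpX hN).le
  · have : Group.IsSolvable T := hT
    have : Nontrivial X := Fintype.one_lt_card_iff_nontrivial.mp (hX ▸ hp.one_lt)
    have : Nontrivial T := nontrivial_of_isPretransitive (X := X)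
    obtain ⟨A, hA, _, hA1⟩ := Group.IsSolvable.exists_normal_isMulCommutative_ne_bot (G := T)
    exact ⟨A, hA, .of_isMulCommutative, hA1⟩
end

section
/- Let p be a prime and F a field. Let G be an irreducible subgroup of GL(p,F) all of whose elements are monomial matrices with all nonzero entries roots of unity, and suppose the diagonal subgroup A = G ∩ D(p,F) contains a non-scalar matrix. Let w ∈ GL(p,F) be such that every element of w⁻¹Gw is a monomial matrix with all nonzero entries roots of unity and every element of w⁻¹Aw is diagonal. Then w is a monomial matrix. If moreover F is algebraically closed, then there exists λ ∈ Fˣ such that λw is a monomial matrix all of whose nonzero entries are roots of unity. -/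
/-- A matrix is scalar if it is a (nonzero) multiple of the identity. -/
def IsScalarMatrix {m : Type*} [DecidableEq m] {F : Type*} [Field F]
    (g : Matrix m m F) : Prop :=
  ∃ c : F, g = c • (1 : Matrix m m F)

open Matrix

section Monomial

variable {n : Type*} [DecidableEq n] {F : Type*} [Field F]

def IsMonomialWith (g : Matrix n n F) (σ : Equiv.Perm n) (d : n → Fˣ) : Prop :=
  ∀ i j, g i j = if i = σ j then (d j : F) else 0

namespace IsMonomialWith

variable {g : Matrix n n F} {σ : Equiv.Perm n} {d : n → Fˣ}

theorem apply_self (hg : IsMonomialWith g σ d) (j : n) : g (σ j) j = d j := by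
  simp [hg (σ j) j]

theorem apply_eq_zero (hg : IsMonomialWith g σ d) {i j : n} (hij : i ≠ σ j) : g i j = 0 := by
  simp [hg i j, hij]

theorem eq_of_apply_ne_zero (hg : IsMonomialWith g σ d) {i j : n} (hij : g i j ≠ 0) :
    i = σ j :=
  not_not.mp fun h => hij (hg.apply_eq_zero h)

theorem smul (hg : IsMonomialWith g σ d) (a : Fˣ) :
    IsMonomialWith ((a : F) • g) σ (fun j => a * d j) := by
  intro i j
  rw [Matrix.smul_apply, hg i j]
  split_ifs <;> simp

variable [Fintype n]

theorem mul_apply (hg : IsMonomialWith g σ d) (M : Matrix n n F) (i j : n) :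
    (M * g) i j = M i (σ j) * d j := by
  rw [Matrix.mul_apply, Finset.sum_eq_single (σ j), hg.apply_self]
  · intro k _ hk
    rw [hg.apply_eq_zero hk, mul_zero]
  · simp

theorem apply_mul (hg : IsMonomialWith g σ d) (M : Matrix n n F) (i j : n) :
    (g * M) (σ i) j = d i * M i j := by
  rw [Matrix.mul_apply, Finset.sum_eq_single i, hg.apply_self]
  · intro k _ hk
    rw [hg.apply_eq_zero (σ.injective.ne hk.symm), zero_mul]
  · simp

theorem diagonal_mul (hg : IsMonomialWith g σ d) (v : n → F) :
    diagonal v * g = g * diagonal (v ∘ σ) := by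
  ext i j
  rw [Matrix.diagonal_mul, mul_diagonal, hg i j]
  split_ifs with h
  · simp [h, mul_comm]
  · simp

end IsMonomialWith

theorem IsMonomialRootsOfUnity.isMonomial {g : Matrix n n F} (hg : IsMonomialRootsOfUnity g) :
    IsMonomial g :=
  let ⟨σ, d, _, hd⟩ := hg
  ⟨σ, d, hd⟩

theorem IsMonomialRootsOfUnity.exists_isOfFinOrder_of_apply_ne_zero {g : Matrix n n F}
    (hg : IsMonomialRootsOfUnity g) {i j : n} (hij : g i j ≠ 0) :
    ∃ u : Fˣ, IsOfFinOrder u ∧ (u : F) = g i j := by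
  obtain ⟨σ, d, hd, hσd⟩ := hg
  have hgd : IsMonomialWith g σ d := hσd
  obtain rfl := hgd.eq_of_apply_ne_zero hij
  exact ⟨d j, hd j, (hgd.apply_self j).symm⟩

theorem IsMonomialWith.exists_smul_isMonomialRootsOfUnity {g : Matrix n n F}
    {σ : Equiv.Perm n} {d : n → Fˣ} (hg : IsMonomialWith g σ d)
    (hd : ∀ j k, IsOfFinOrder (d j / d k)) :
    ∃ a : Fˣ, IsMonomialRootsOfUnity ((a : F) • g) := by
  cases isEmpty_or_nonempty n with
  | inl _ => exact ⟨1, σ, d, isEmptyElim, isEmptyElim⟩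
  | inr hn =>
    obtain ⟨k⟩ := hn
    refine ⟨(d k)⁻¹, σ, _, fun j => ?_, hg.smul _⟩
    simpa only [inv_mul_eq_div] using hd j k

end Monomial

section Irreducible

variable {n : Type*} [Fintype n] [DecidableEq n] {F : Type*} [Field F]

def Subgroup.IsIrreducible (G : Subgroup (GL n F)) : Prop :=
  ∀ W : Submodule F (n → F), (∀ g ∈ G, ∀ v ∈ W, (g : Matrix n n F) *ᵥ v ∈ W) → W = ⊥ ∨ W = ⊤

theorem Subgroup.IsIrreducible.exists_mem_apply_ne_zero {G : Subgroup (GL n F)}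
    (hG : G.IsIrreducible) (i i' : n) : ∃ g ∈ G, (g : Matrix n n F) i' i ≠ 0 := by
  by_contra! h
  let W : Submodule F (n → F) :=
    ⨅ g ∈ G, LinearMap.ker ((LinearMap.proj i').comp (mulVecLin (g : Matrix n n F)))
  have hmem : ∀ v, v ∈ W ↔ ∀ g ∈ G, ((g : Matrix n n F) *ᵥ v) i' = 0 := by
    simp [W, Submodule.mem_iInf]
  have hinv : ∀ g ∈ G, ∀ v ∈ W, (g : Matrix n n F) *ᵥ v ∈ W := by
    intro g hg v hv
    rw [hmem] at hv ⊢
    intro h hh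
    rw [mulVec_mulVec, ← Units.val_mul]
    exact hv _ (mul_mem hh hg)
  rcases hG W hinv with hbot | htop
  · have : Pi.single i 1 ∈ W := (hmem _).2 fun g hg => by simp [mulVec_single, h g hg]
    simp [hbot] at this
  · have : Pi.single i' 1 ∈ W := htop ▸ Submodule.mem_top
    simpa using (hmem _).1 this 1 (one_mem G)

end Irreducible

section PermutationBlocks

variable {n α : Type*}

def compStabilizer (D : Set (n → α)) : Subgroup (Equiv.Perm n) where
  carrier := {σ | ∀ v, v ∘ σ ∈ D ↔ v ∈ D}
  one_mem' _ := Iff.rfl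
  mul_mem' {σ τ} hσ hτ v := (hτ (v ∘ σ)).trans (hσ v)
  inv_mem' {σ} hσ v := by
    simpa [Function.comp_assoc] using (hσ (v ∘ σ.symm)).symm

variable {D : Set (n → α)}

theorem forall_apply_eq_iff_of_mem_compStabilizer {σ : Equiv.Perm n}
    (hσ : σ ∈ compStabilizer D) (i j : n) :
    (∀ v ∈ D, v (σ i) = v (σ j)) ↔ ∀ v ∈ D, v i = v j := by
  refine ⟨fun h v hv => ?_, fun h v hv => h (v ∘ σ) ((hσ v).2 hv)⟩
  simpa using h (v ∘ σ.symm) ((inv_mem hσ v).2 hv)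

theorem isBlock_compStabilizer (D : Set (n → α)) (i : n) :
    MulAction.IsBlock (compStabilizer D) {j | ∀ v ∈ D, v j = v i} := by
  rw [MulAction.isBlock_iff_smul_eq_of_mem]
  rintro ⟨σ, hσ⟩ a ha hσa
  have hσi : ∀ v ∈ D, v (σ i) = v i := fun v hv =>
    ((forall_apply_eq_iff_of_mem_compStabilizer hσ a i).2 ha v hv).symm.trans (hσa v hv)
  ext j
  rw [Set.mem_smul_set_iff_inv_smul_mem]
  have := forall_apply_eq_iff_of_mem_compStabilizer hσ (σ⁻¹ j) i
  simp only [Equiv.Perm.coe_inv, Equiv.apply_symm_apply] at this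
  simp only [Set.mem_ofPred_eq, Subgroup.smul_def, Subgroup.coe_inv, Equiv.Perm.smul_def,
    Equiv.Perm.coe_inv]
  rw [← this]
  exact forall₂_congr fun v hv => by rw [hσi v hv]

end PermutationBlocks

theorem exists_diag_ne_of_not_isScalarMatrix {n : Type*} [DecidableEq n] {F : Type*} [Field F]
    {a : Matrix n n F} (ha : a.IsDiag)
    (hns : ¬ IsScalarMatrix a) : ∃ k l, a.diag k ≠ a.diag l := by
  by_contra! h
  cases isEmpty_or_nonempty n with
  | inl _ => exact hns ⟨0, Subsingleton.elim _ _⟩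
  | inr hn =>
    obtain ⟨k⟩ := hn
    refine hns ⟨a k k, ?_⟩
    calc a = diagonal a.diag := ha.diagonal_diag.symm
      _ = diagonal fun _ => a k k := congrArg diagonal (funext fun l => h l k)
      _ = a k k • 1 := (smul_one_eq_diagonal _).symm

section DiagonalSubgroup

variable {n : Type*} [Fintype n] [DecidableEq n] {F : Type*} [Field F] {G : Subgroup (GL n F)}

def Subgroup.diagonalVectors (G : Subgroup (GL n F)) : Set (n → F) :=
  {v | ∃ a ∈ G, (a : Matrix n n F) = diagonal v}

theorem IsMonomialWith.mem_compStabilizer {g : GL n F} (hg : g ∈ G) {σ : Equiv.Perm n}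
    {d : n → Fˣ} (hgσ : IsMonomialWith (g : Matrix n n F) σ d) :
    σ ∈ compStabilizer G.diagonalVectors := by
  intro v
  have hconj := hgσ.diagonal_mul v
  constructor
  · rintro ⟨a, ha, hav⟩
    refine ⟨g * a * g⁻¹, mul_mem (mul_mem hg ha) (inv_mem hg), ?_⟩
    rw [Units.val_mul, Units.val_mul, hav, ← hconj, mul_assoc, Units.mul_inv, mul_one]
  · rintro ⟨a, ha, hav⟩
    refine ⟨g⁻¹ * a * g, mul_mem (mul_mem (inv_mem hg) ha) hg, ?_⟩
    rw [Units.val_mul, Units.val_mul, hav, mul_assoc, hconj, ← mul_assoc, Units.inv_mul, one_mul]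

theorem Subgroup.IsIrreducible.exists_mem_diagonalVectors_apply_ne (hG : G.IsIrreducible)
    (hcard : (Nat.card n).Prime) (hmono : ∀ g ∈ G, IsMonomial (g : Matrix n n F))
    (hns : ∃ v ∈ G.diagonalVectors, ∃ k l, v k ≠ v l) {i j : n} (hij : i ≠ j) :
    ∃ v ∈ G.diagonalVectors, v i ≠ v j := by
  have : MulAction.IsPretransitive (compStabilizer G.diagonalVectors) n := by
    refine ⟨fun k l => ?_⟩
    obtain ⟨g, hg, hne⟩ := hG.exists_mem_apply_ne_zero k l
    obtain ⟨σ, d, hgσ⟩ : ∃ σ d, IsMonomialWith (g : Matrix n n F) σ d := hmono g hg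
    exact ⟨⟨σ, hgσ.mem_compStabilizer hg⟩, (hgσ.eq_of_apply_ne_zero hne).symm⟩
  have := MulAction.IsPreprimitive.of_prime_card (G := compStabilizer G.diagonalVectors) hcard
  rcases (isBlock_compStabilizer G.diagonalVectors i).subsingleton_or_eq_univ with hsub | huniv
  · by_contra! h
    exact hij (hsub (fun _ _ => rfl) fun v hv => (h v hv).symm)
  · obtain ⟨v, hv, k, l, hkl⟩ := hns
    have hconst : ∀ k, v k = v i := fun k => Set.eq_univ_iff_forall.mp huniv k v hv
    exact absurd ((hconst k).trans (hconst l).symm) hkl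

theorem apply_eq_of_diagonal_mul_eq {w : Matrix n n F} {u v : n → F}
    (h : diagonal u * w = w * diagonal v) {i j : n} (hij : w i j ≠ 0) : u i = v j := by
  have := congr_fun₂ h i j
  rw [Matrix.diagonal_mul, mul_diagonal, mul_comm] at this
  exact mul_left_cancel₀ hij this

theorem val_mul_eq_mul_val_conj {M : Type*} [Monoid M] (a w : Mˣ) :
    (a : M) * w = w * ↑(w⁻¹ * a * w) := by
  rw [Units.val_mul, Units.val_mul, ← mul_assoc, ← mul_assoc, Units.mul_inv, one_mul]

theorem apply_eq_apply_of_conj_isDiag {w : GL n F}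
    (hwA : ∀ a ∈ G, (a : Matrix n n F).IsDiag → (↑(w⁻¹ * a * w) : Matrix n n F).IsDiag)
    {v : n → F} (hv : v ∈ G.diagonalVectors) {i i' j : n} (hi : (w : Matrix n n F) i j ≠ 0)
    (hi' : (w : Matrix n n F) i' j ≠ 0) : v i = v i' := by
  obtain ⟨a, ha, hav⟩ := hv
  have hb := hwA a ha (hav ▸ isDiag_diagonal v)
  have h := val_mul_eq_mul_val_conj a w
  rw [hav, ← hb.diagonal_diag] at h
  exact (apply_eq_of_diagonal_mul_eq h hi).trans (apply_eq_of_diagonal_mul_eq h hi').symm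

theorem isMonomial_of_apply_ne_zero_imp_eq (w : GL n F)
    (hcol : ∀ i i' j, (w : Matrix n n F) i j ≠ 0 → (w : Matrix n n F) i' j ≠ 0 → i = i') :
    IsMonomial (w : Matrix n n F) := by
  have hdet : (w : Matrix n n F).det ≠ 0 :=
    ((Matrix.isUnit_iff_isUnit_det _).mp w.isUnit).ne_zero
  have hcolne : ∀ j, ∃ i, (w : Matrix n n F) i j ≠ 0 := fun j => by
    by_contra! h
    exact hdet (det_eq_zero_of_column_eq_zero j h)
  choose f hf using hcolne
  have hsurj : f.Surjective := fun i => by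
    by_contra! h
    exact hdet (det_eq_zero_of_row_eq_zero i fun j =>
      not_not.mp fun hne => h j (hcol _ _ _ (hf j) hne))
  refine ⟨Equiv.ofBijective f (Finite.surjective_iff_bijective.mp hsurj),
    fun j => Units.mk0 _ (hf j), fun i j => ?_⟩
  simp only [Equiv.ofBijective_apply, Units.val_mk0]
  split_ifs with h
  · rw [h]
  · exact not_not.mp fun hne => h (hcol _ _ _ hne (hf j))

theorem IsMonomialWith.isOfFinOrder_div_of_mul_eq_mul {g w b : Matrix n n F}
    {σ : Equiv.Perm n} {c : n → Fˣ} (hw : IsMonomialWith w σ c) (hg : IsMonomialRootsOfUnity g)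
    (hb : IsMonomialRootsOfUnity b) (h : g * w = w * b) {j k : n} (hne : g (σ j) (σ k) ≠ 0) :
    IsOfFinOrder (c j / c k) := by
  have key : g (σ j) (σ k) * c k = c j * b j k := by
    rw [← hw.mul_apply, ← hw.apply_mul, h]
  have hb0 : b j k ≠ 0 := fun h0 => by simp [h0, hne] at key
  obtain ⟨x, hx, hxg⟩ := hg.exists_isOfFinOrder_of_apply_ne_zero hne
  obtain ⟨y, hy, hyb⟩ := hb.exists_isOfFinOrder_of_apply_ne_zero hb0
  have hratio : c j / c k = x / y := by
    rw [div_eq_div_iff_mul_eq_mul]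
    ext
    simp only [Units.val_mul, hxg, hyb, key]
  simpa only [hratio, div_eq_mul_inv] using hx.mul hy.inv

end DiagonalSubgroup

/-- Let `G ≤ GL(p,F)` be irreducible, consisting of monomial matrices with
root-of-unity entries, with non-scalar diagonal subgroup `A = G ∩ D(p,F)`.
If `w⁻¹Gw` again consists of such monomial matrices and `w⁻¹Aw` is diagonal,
then `w` is monomial; if `F` is algebraically closed, some scalar multiple of `w`
is monomial with root-of-unity entries. -/
theorem conjugator_respecting_diagonal_is_monomial
    {p : ℕ} (hp : p.Prime) {F : Type*} [Field F]
    (G : Subgroup (Matrix.GeneralLinearGroup (Fin p) F))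
    (hirr : ∀ W : Submodule F (Fin p → F),
      (∀ g ∈ G, ∀ v ∈ W, Matrix.mulVec (g : Matrix (Fin p) (Fin p) F) v ∈ W) →
      W = ⊥ ∨ W = ⊤)
    (hmono : ∀ g ∈ G, IsMonomialRootsOfUnity (g : Matrix (Fin p) (Fin p) F))
    (hnonscalar : ∃ a ∈ G, Matrix.IsDiag (a : Matrix (Fin p) (Fin p) F) ∧
      ¬ IsScalarMatrix (a : Matrix (Fin p) (Fin p) F))
    (w : Matrix.GeneralLinearGroup (Fin p) F)
    (hwG : ∀ g ∈ G, IsMonomialRootsOfUnity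
      ((w⁻¹ * g * w : Matrix.GeneralLinearGroup (Fin p) F) : Matrix (Fin p) (Fin p) F))
    (hwA : ∀ a ∈ G, Matrix.IsDiag (a : Matrix (Fin p) (Fin p) F) →
      Matrix.IsDiag ((w⁻¹ * a * w : Matrix.GeneralLinearGroup (Fin p) F) : Matrix (Fin p) (Fin p) F)) :
    IsMonomial (w : Matrix (Fin p) (Fin p) F) ∧
    (IsAlgClosed F → ∃ c : Fˣ,
      IsMonomialRootsOfUnity ((c : F) • (w : Matrix (Fin p) (Fin p) F))) := by
  replace hirr : G.IsIrreducible := hirr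
  have hcard : (Nat.card (Fin p)).Prime := by rwa [Nat.card_fin]
  have hns : ∃ v ∈ G.diagonalVectors, ∃ k l, v k ≠ v l := by
    obtain ⟨a, ha, hdiag, hnotscalar⟩ := hnonscalar
    exact ⟨(a : Matrix (Fin p) (Fin p) F).diag, ⟨a, ha, hdiag.diagonal_diag.symm⟩,
      exists_diag_ne_of_not_isScalarMatrix hdiag hnotscalar⟩
  obtain ⟨σ, c, hc⟩ : ∃ σ c, IsMonomialWith (w : Matrix (Fin p) (Fin p) F) σ c := by
    refine isMonomial_of_apply_ne_zero_imp_eq w fun i i' j hi hi' => ?_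
    by_contra hne
    obtain ⟨v, hv, hvne⟩ := hirr.exists_mem_diagonalVectors_apply_ne hcard
      (fun g hg => (hmono g hg).isMonomial) hns hne
    exact hvne (apply_eq_apply_of_conj_isDiag hwA hv hi hi')
  refine ⟨⟨σ, c, hc⟩, fun _ => hc.exists_smul_isMonomialRootsOfUnity fun j k => ?_⟩
  obtain ⟨g, hg, hne⟩ := hirr.exists_mem_apply_ne_zero (σ k) (σ j)
  exact hc.isOfFinOrder_div_of_mul_eq_mul (hmono g hg) (hwG g hg)
    (val_mul_eq_mul_val_conj g w) hne
end

section
/- Let p be a prime and let G be a finite irreducible subgroup of GL(p,ℂ) all of whose elements are monomial matrices. Then the diagonal subgroup G ∩ D(p,ℂ) is a maximal abelian normal subgroup of G; that is, G ∩ D(p,ℂ) is abelian and normal in G, and it is not properly contained in any abelian normal subgroup of G. -/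
/-!
Write `π g` for the permutation part of `g ∈ G`; its kernel is the diagonal subgroup `D`, which is
therefore abelian and normal. Let `B ⊇ D` be an abelian normal subgroup of `G` and suppose some
`b ∈ B` has `ρ = π b ≠ 1`. Irreducibility makes `π G` transitive on the `p` coordinates, and in
prime degree every nontrivial normal subgroup of a transitive group is transitive: first `π B`,
then `⟨ρ⟩ ◁ π B`. Every `d ∈ D` commutes with `B`, so its diagonal is constant on `π B`-orbits and
`D` consists of scalars. Hence an element of `G` whose permutation part centralises `ρ` is a
scalar times a power of `b` and preserves the line through an eigenvector `v` of `b`. The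
conjugates `π (g * b * g⁻¹)` lie in `π B`, hence centralise `ρ`, so each is determined by where it
sends a chosen point `x₀`, which is never `x₀`; and when two conjugates agree, `π (g⁻¹ * g')`
centralises `ρ`, so `g v` and `g' v` are proportional. Thus the vectors `g v` lie on at most
`p - 1` lines, yet by irreducibility they span `ℂ^p`.
-/

open Matrix MulAction

section Monomial

variable {m : Type*} [DecidableEq m] {F : Type*} [Field F]

namespace HasPermPart

theorem unique {g : Matrix m m F} {σ τ : Equiv.Perm m} (hσ : HasPermPart g σ)
    (hτ : HasPermPart g τ) : σ = τ := by
  obtain ⟨d, hd⟩ := hσ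
  obtain ⟨e, he⟩ := hτ
  ext j
  by_contra hne
  simpa [hne] using (hd (σ j) j).symm.trans (he (σ j) j)

theorem isDiag_iff {g : Matrix m m F} {σ : Equiv.Perm m} (hg : HasPermPart g σ) :
    g.IsDiag ↔ σ = 1 := by
  obtain ⟨d, hd⟩ := hg
  constructor
  · intro hdiag
    ext j
    by_contra hne
    simpa [hd] using hdiag (hne : σ j ≠ j)
  · rintro rfl i j hij
    simp [hd, hij]

variable [Fintype m]

theorem mul {g h : Matrix m m F} {σ τ : Equiv.Perm m} (hg : HasPermPart g σ)
    (hh : HasPermPart h τ) : HasPermPart (g * h) (σ * τ) := by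
  obtain ⟨d, hd⟩ := hg
  obtain ⟨e, he⟩ := hh
  refine ⟨fun j => d (τ j) * e j, fun i j => ?_⟩
  rw [Matrix.mul_apply, Finset.sum_eq_single (τ j)]
  · rw [hd, he, if_pos rfl, Equiv.Perm.mul_apply]
    split_ifs <;> simp
  · intro k _ hk
    simp [he, hk]
  · simp

theorem mulVec_apply {g : Matrix m m F} {σ : Equiv.Perm m} (hg : HasPermPart g σ)
    (v : m → F) (j : m) : ∃ c : F, (g *ᵥ v) (σ j) = c * v j := by
  obtain ⟨d, hd⟩ := hg
  refine ⟨d j, ?_⟩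
  rw [Matrix.mulVec, dotProduct, Finset.sum_eq_single j]
  · simp [hd]
  · intro k _ hk
    simp [hd, Ne.symm hk]
  · simp

theorem diagonal_apply_eq_of_commute {g : Matrix m m F} {σ : Equiv.Perm m}
    (hg : HasPermPart g σ) {c : m → F} (hc : Commute (diagonal c) g) (j : m) :
    c (σ j) = c j := by
  obtain ⟨d, hd⟩ := hg
  have := congrFun (congrFun hc.eq (σ j)) j
  simp only [diagonal_mul, mul_diagonal, hd, if_true] at this
  exact mul_right_cancel₀ (d j).ne_zero (this.trans (mul_comm _ _))

end HasPermPart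

variable [Fintype m] {G : Subgroup (GL m F)}

noncomputable def permPartHom (hmono : ∀ g ∈ G, IsMonomial (g : Matrix m m F)) :
    G →* Equiv.Perm m :=
  MonoidHom.mk' (fun g => (hmono g g.2).choose) fun g h =>
    (hmono _ (g * h).2).choose_spec.unique
      ((hmono g g.2).choose_spec.mul (hmono h h.2).choose_spec)

variable (hmono : ∀ g ∈ G, IsMonomial (g : Matrix m m F))

theorem hasPermPart_permPartHom (g : G) :
    HasPermPart ((g : GL m F) : Matrix m m F) (permPartHom hmono g) :=
  (hmono g g.2).choose_spec

theorem permPartHom_eq_one_iff (g : G) :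
    permPartHom hmono g = 1 ↔ ((g : GL m F) : Matrix m m F).IsDiag :=
  ((hasPermPart_permPartHom hmono g).isDiag_iff).symm

end Monomial

namespace Equiv.Perm

variable {α : Type*}

theorem isPretransitive_of_normal_of_prime_card (hp : (Nat.card α).Prime)
    {T N : Subgroup (Perm α)} [IsPretransitive T α] (hNT : N ≤ T)
    (hN : ∀ t ∈ T, ∀ n ∈ N, t * n * t⁻¹ ∈ N) (hN1 : N ≠ ⊥) : IsPretransitive N α := by
  have : IsPreprimitive T α := IsPreprimitive.of_prime_card hp
  have : (N.subgroupOf T).Normal :=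
    (Subgroup.normal_subgroupOf_iff hNT).mpr fun n t hn ht => hN t ht n hn
  obtain ⟨n, hn1⟩ := Subgroup.ne_bot_iff_exists_ne_one.mp hN1
  have hmoved : fixedPoints (N.subgroupOf T) α ≠ .univ := by
    obtain ⟨x, hx⟩ : ∃ x, n.1 x ≠ x := by
      by_contra! h
      exact hn1 (Subtype.ext (Equiv.ext h))
    exact fun h => hx (_root_.Set.eq_univ_iff_forall.mp h x ⟨⟨n, hNT n.2⟩, n.2⟩)
  have := IsQuasiPreprimitive.isPretransitive_of_normal hmoved
  refine ⟨fun x y => ?_⟩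
  obtain ⟨n, h⟩ := exists_smul_eq (N.subgroupOf T) x y
  exact ⟨⟨n.1.1, n.2⟩, h⟩

theorem isPretransitive_zpowers_of_mem (hp : (Nat.card α).Prime) {A : Subgroup (Perm α)}
    [IsPretransitive A α] (hA : ∀ σ ∈ A, ∀ τ ∈ A, Commute σ τ) {ρ : Perm α} (hρA : ρ ∈ A)
    (hρ : ρ ≠ 1) : IsPretransitive (Subgroup.zpowers ρ) α := by
  refine isPretransitive_of_normal_of_prime_card hp (Subgroup.zpowers_le.mpr hρA)
    (fun t ht n hn => ?_) (Subgroup.zpowers_ne_bot.mpr hρ)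
  rwa [(hA t ht n (Subgroup.zpowers_le.mpr hρA hn)).eq, mul_inv_cancel_right]

variable {ρ : Perm α} [IsPretransitive (Subgroup.zpowers ρ) α]

theorem eq_of_commute_of_apply_eq {σ τ : Perm α} (hσ : Commute σ ρ) (hτ : Commute τ ρ)
    {x : α} (h : σ x = τ x) : σ = τ := by
  ext y
  obtain ⟨⟨_, k, rfl⟩, rfl⟩ := exists_smul_eq (Subgroup.zpowers ρ) x y
  change σ ((ρ ^ k) x) = τ ((ρ ^ k) x)
  rw [← mul_apply, ← mul_apply, (hσ.zpow_right k).eq, (hτ.zpow_right k).eq, mul_apply, mul_apply, h]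

theorem mem_zpowers_of_commute [Nonempty α] {τ : Perm α} (hτ : Commute τ ρ) :
    τ ∈ Subgroup.zpowers ρ := by
  obtain ⟨x⟩ := ‹Nonempty α›
  obtain ⟨⟨_, k, rfl⟩, hk⟩ := exists_smul_eq (Subgroup.zpowers ρ) x (τ x)
  exact ⟨k, (eq_of_commute_of_apply_eq ((Commute.refl ρ).zpow_left k) hτ hk)⟩

end Equiv.Perm

section LinearAlgebra

open Module Submodule

theorem finrank_span_range_le_card {K V X ι : Type*} [Field K] [AddCommGroup V] [Module K V]
    [Fintype ι] (f : X → V) (key : X → ι)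
    (h : ∀ x y, key x = key y → ∃ c : K, f y = c • f x) :
    finrank K (span K (Set.range f)) ≤ Fintype.card ι := by
  classical
  let φ : ι → V := fun i => if hi : ∃ x, key x = i then f hi.choose else 0
  have hle : span K (Set.range f) ≤ span K (Set.range φ) := by
    refine span_le.mpr ?_
    rintro _ ⟨y, rfl⟩
    have hy : ∃ x, key x = key y := ⟨y, rfl⟩
    obtain ⟨c, hc⟩ := h _ y hy.choose_spec
    rw [hc]
    exact smul_mem _ c (subset_span ⟨key y, dif_pos hy⟩)
  have := FiniteDimensional.span_of_finite K (Set.finite_range φ)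
  exact (Submodule.finrank_mono hle).trans (finrank_range_le_card φ)

variable {m : Type*} [Fintype m] [DecidableEq m] {F : Type*} [Field F]

theorem span_range_mulVec_eq_top {G : Subgroup (GL m F)}
    (hirr : ∀ W : Submodule F (m → F),
      (∀ g ∈ G, ∀ v ∈ W, (g : Matrix m m F) *ᵥ v ∈ W) → W = ⊥ ∨ W = ⊤)
    {v : m → F} (hv : v ≠ 0) :
    span F (Set.range fun g : G => ((g : GL m F) : Matrix m m F) *ᵥ v) = ⊤ := by
  refine (hirr _ fun g hg w hw => ?_).resolve_left fun hbot => hv ?_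
  · refine (span_le (p := (span F _).comap (toLin' (g : Matrix m m F)))).mpr ?_ hw
    rintro _ ⟨h, rfl⟩
    refine subset_span ⟨⟨g, hg⟩ * h, ?_⟩
    simp [mulVec_mulVec]
  · rw [← mem_bot F, ← hbot]
    exact subset_span ⟨1, by simp⟩

end LinearAlgebra

section MonomialGroup

variable {m : Type*} [Fintype m] [DecidableEq m] {F : Type*} [Field F]
  {G : Subgroup (GL m F)} (hmono : ∀ g ∈ G, IsMonomial (g : Matrix m m F))

theorem isPretransitive_range_permPartHom
    (hirr : ∀ W : Submodule F (m → F),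
      (∀ g ∈ G, ∀ v ∈ W, (g : Matrix m m F) *ᵥ v ∈ W) → W = ⊥ ∨ W = ⊤) :
    IsPretransitive (permPartHom hmono).range m := by
  refine ⟨fun x y => ?_⟩
  let S : Set m := {y | ∃ g : G, permPartHom hmono g x = y}
  let W : Submodule F (m → F) := Submodule.pi Sᶜ fun _ => ⊥
  have hmemW : ∀ v, v ∈ W ↔ ∀ i ∉ S, v i = 0 := fun v => by simp [W]
  have hW : ∀ g ∈ G, ∀ v ∈ W, (g : Matrix m m F) *ᵥ v ∈ W := by
    simp only [hmemW]
    intro g hg v hv i hi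
    obtain ⟨j, rfl⟩ := (permPartHom hmono ⟨g, hg⟩).surjective i
    obtain ⟨c, hc⟩ := (hasPermPart_permPartHom hmono ⟨g, hg⟩).mulVec_apply v j
    have hj : j ∉ S := fun ⟨h, hh⟩ => hi ⟨⟨g, hg⟩ * h, by simp [hh]⟩
    rw [hc, hv j hj, mul_zero]
  have hsingle : ∀ z, Pi.single z (1 : F) ∈ W ↔ z ∈ S := by
    intro z
    rw [hmemW]
    refine ⟨fun hz => by_contra fun hzS => ?_, fun hz i hi => ?_⟩
    · simpa using hz z hzS
    · simp [show i ≠ z from fun h => hi (h ▸ hz)]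
  rcases hirr W hW with hbot | htop
  · have hx := (hsingle x).mpr ⟨1, by simp⟩
    simp [hbot] at hx
  · obtain ⟨g, hg⟩ := (hsingle y).mp (htop ▸ Submodule.mem_top)
    exact ⟨⟨_, g, rfl⟩, hg⟩

variable {hmono} [Nonempty m]

theorem exists_eq_smul_one_of_commute (B : Subgroup G)
    [IsPretransitive (B.map (permPartHom hmono)) m] {a : G} (ha : permPartHom hmono a = 1)
    (hcomm : ∀ b ∈ B, Commute a b) : ∃ c : F, ((a : GL m F) : Matrix m m F) = c • 1 := by
  have hdiag := (permPartHom_eq_one_iff hmono a).mp ha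
  let x := Classical.arbitrary m
  refine ⟨((a : GL m F) : Matrix m m F) x x, ?_⟩
  rw [smul_one_eq_diagonal]
  conv_lhs => rw [← hdiag.diagonal_diag]
  congr 1
  funext i
  obtain ⟨⟨_, b, hb, rfl⟩, rfl⟩ := exists_smul_eq (B.map (permPartHom hmono)) x i
  change ((a : GL m F) : Matrix m m F).diag (permPartHom hmono b x) =
    ((a : GL m F) : Matrix m m F).diag x
  refine (hasPermPart_permPartHom hmono b).diagonal_apply_eq_of_commute ?_ x
  rw [hdiag.diagonal_diag]
  exact ((hcomm b hb).map G.subtype).units_val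

variable {b : G} [IsPretransitive (Subgroup.zpowers (permPartHom hmono b)) m]
  {μ : F} {v : m → F}

theorem exists_mulVec_eq_smul_of_commute
    (hscalar : ∀ a : G, permPartHom hmono a = 1 → ∃ c : F, ((a : GL m F) : Matrix m m F) = c • 1)
    (hv : ((b : GL m F) : Matrix m m F) *ᵥ v = μ • v) {h : G}
    (hh : Commute (permPartHom hmono h) (permPartHom hmono b)) :
    ∃ c : F, ((h : GL m F) : Matrix m m F) *ᵥ v = c • v := by
  obtain ⟨n, hn⟩ := (isOfFinOrder_of_finite _).mem_powers_iff_mem_zpowers.mpr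
    (Equiv.Perm.mem_zpowers_of_commute hh)
  obtain ⟨c, hc⟩ := hscalar (h * (b ^ n)⁻¹) (by simp [← hn])
  have hpow : ∀ k : ℕ, ((b : GL m F) : Matrix m m F) ^ k *ᵥ v = μ ^ k • v := by
    intro k
    induction k with
    | zero => simp
    | succ k ih => rw [pow_succ, ← mulVec_mulVec, hv, mulVec_smul, ih, smul_smul, pow_succ']
  have hsplit : ((h : GL m F) : Matrix m m F)
      = (((h * (b ^ n)⁻¹ : G) : GL m F) : Matrix m m F) * ((b : GL m F) : Matrix m m F) ^ n := by
    simp [mul_assoc]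
  exact ⟨c * μ ^ n, by rw [hsplit, hc, ← mulVec_mulVec, hpow, smul_mulVec, one_mulVec, smul_smul]⟩

theorem finrank_span_range_mulVec_lt
    (hscalar : ∀ a : G, permPartHom hmono a = 1 → ∃ c : F, ((a : GL m F) : Matrix m m F) = c • 1)
    (hv : ((b : GL m F) : Matrix m m F) *ᵥ v = μ • v) (hb : permPartHom hmono b ≠ 1)
    (hconj : ∀ g : G, Commute (permPartHom hmono (g * b * g⁻¹)) (permPartHom hmono b)) :
    Module.finrank F (Submodule.span F (Set.range fun g : G => ((g : GL m F) : Matrix m m F) *ᵥ v))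
      < Fintype.card m := by
  set π := permPartHom hmono
  let x₀ := Classical.arbitrary m
  have hkey : ∀ g : G, π (g * b * g⁻¹) x₀ ≠ x₀ := fun g hg =>
    hb (by simpa using Equiv.Perm.eq_of_commute_of_apply_eq (hconj g) (Commute.one_left _) hg)
  have hprop : ∀ g g' : G, π (g * b * g⁻¹) x₀ = π (g' * b * g'⁻¹) x₀ →
      ∃ c : F, ((g' : GL m F) : Matrix m m F) *ᵥ v = c • (((g : GL m F) : Matrix m m F) *ᵥ v) := by
    intro g g' h
    have heq := Equiv.Perm.eq_of_commute_of_apply_eq (hconj g) (hconj g') h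
    have hcomm : Commute (π (g⁻¹ * g')) (π b) := by
      simp only [map_mul, map_inv] at heq ⊢
      calc (π g)⁻¹ * π g' * π b = (π g)⁻¹ * (π g' * π b * (π g')⁻¹) * π g' := by group
        _ = (π g)⁻¹ * (π g * π b * (π g)⁻¹) * π g' := by rw [heq]
        _ = π b * ((π g)⁻¹ * π g') := by group
    obtain ⟨c, hc⟩ := exists_mulVec_eq_smul_of_commute hscalar hv hcomm
    refine ⟨c, ?_⟩
    have hsplit : ((g' : GL m F) : Matrix m m F) *ᵥ v =
        ((g : GL m F) : Matrix m m F) *ᵥ (((g⁻¹ * g' : G) : GL m F) : Matrix m m F) *ᵥ v := by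
      simp [mulVec_mulVec]
    rw [hsplit, hc, mulVec_smul]
  calc _ ≤ Fintype.card {y // y ≠ x₀} :=
        finrank_span_range_le_card _ (fun g => ⟨_, hkey g⟩) fun g g' h =>
          hprop g g' (congrArg Subtype.val h)
    _ < Fintype.card m := Fintype.card_subtype_lt (not_not.mpr rfl)

end MonomialGroup

theorem le_ker_permPartHom {m : Type*} [Fintype m] [DecidableEq m] {F : Type*} [Field F]
    [IsAlgClosed F] (hp : (Fintype.card m).Prime) {G : Subgroup (GL m F)}
    (hmono : ∀ g ∈ G, IsMonomial (g : Matrix m m F))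
    (hirr : ∀ W : Submodule F (m → F),
      (∀ g ∈ G, ∀ v ∈ W, (g : Matrix m m F) *ᵥ v ∈ W) → W = ⊥ ∨ W = ⊤)
    (B : Subgroup G) [B.Normal] (hB : ∀ x ∈ B, ∀ y ∈ B, Commute x y)
    (hker : (permPartHom hmono).ker ≤ B) : B ≤ (permPartHom hmono).ker := by
  intro b hb
  by_contra hρ
  rw [MonoidHom.mem_ker] at hρ
  set π := permPartHom hmono
  have hp' : (Nat.card m).Prime := by rwa [Nat.card_eq_fintype_card]
  have : Nonempty m := Fintype.card_pos_iff.mp hp.pos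
  have := isPretransitive_range_permPartHom hmono hirr
  have hAcomm : ∀ σ ∈ B.map π, ∀ τ ∈ B.map π, Commute σ τ := by
    rintro _ ⟨x, hx, rfl⟩ _ ⟨y, hy, rfl⟩
    exact (hB x hx y hy).map π
  have hρA : π b ∈ B.map π := ⟨b, hb, rfl⟩
  have hconjA : ∀ g : G, π (g * b * g⁻¹) ∈ B.map π := fun g =>
    ⟨_, Subgroup.Normal.conj_mem ‹_› b hb g, rfl⟩
  have : IsPretransitive (B.map π) m := by
    refine Equiv.Perm.isPretransitive_of_normal_of_prime_card hp' (Subgroup.map_le_range _ _)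
      ?_ fun h => hρ (by simpa [h] using hρA)
    rintro _ ⟨g, rfl⟩ _ ⟨x, hx, rfl⟩
    exact ⟨g * x * g⁻¹, Subgroup.Normal.conj_mem ‹_› x hx g, by simp⟩
  have := Equiv.Perm.isPretransitive_zpowers_of_mem hp' hAcomm hρA hρ
  obtain ⟨μ, hμ⟩ := Module.End.exists_eigenvalue (toLin' ((b : GL m F) : Matrix m m F))
  obtain ⟨v, hv⟩ := hμ.exists_hasEigenvector
  have hlt := finrank_span_range_mulVec_lt
    (fun a ha => exists_eq_smul_one_of_commute B ha (hB a (hker ha)))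
    (by simpa using hv.apply_eq_smul) hρ (fun g => hAcomm _ (hconjA g) _ hρA)
  rw [span_range_mulVec_eq_top hirr hv.2, finrank_top, Module.finrank_fintype_fun_eq_card] at hlt
  exact lt_irrefl _ hlt

theorem diagonal_subgroup_maximal_abelian_normal_general
    {p : ℕ} (hp : p.Prime)
    (G : Subgroup (Matrix.GeneralLinearGroup (Fin p) ℂ))
    (hmono : ∀ g ∈ G, IsMonomial (g : Matrix (Fin p) (Fin p) ℂ))
    (hirr : ∀ W : Submodule ℂ (Fin p → ℂ),
      (∀ g ∈ G, ∀ v ∈ W, Matrix.mulVec (g : Matrix (Fin p) (Fin p) ℂ) v ∈ W) →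
      W = ⊥ ∨ W = ⊤) :
    (∀ a ∈ G, ∀ b ∈ G, Matrix.IsDiag (a : Matrix (Fin p) (Fin p) ℂ) →
      Matrix.IsDiag (b : Matrix (Fin p) (Fin p) ℂ) → a * b = b * a) ∧
    (∀ g ∈ G, ∀ a ∈ G, Matrix.IsDiag (a : Matrix (Fin p) (Fin p) ℂ) →
      Matrix.IsDiag ((g * a * g⁻¹ : Matrix.GeneralLinearGroup (Fin p) ℂ) :
        Matrix (Fin p) (Fin p) ℂ)) ∧
    (∀ B : Subgroup (Matrix.GeneralLinearGroup (Fin p) ℂ), B ≤ G →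
      (∀ x ∈ B, ∀ y ∈ B, x * y = y * x) →
      (∀ g ∈ G, ∀ b ∈ B, g * b * g⁻¹ ∈ B) →
      (∀ a ∈ G, Matrix.IsDiag (a : Matrix (Fin p) (Fin p) ℂ) → a ∈ B) →
      ∀ b ∈ B, Matrix.IsDiag (b : Matrix (Fin p) (Fin p) ℂ)) := by
  refine ⟨fun a _ b _ ha hb => ?_, fun g hg a ha hda => ?_, fun B hBG hBab hBnorm hBdiag b hb => ?_⟩
  · ext1
    rw [Units.val_mul, Units.val_mul, ← ha.diagonal_diag, ← hb.diagonal_diag]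
    exact (commute_diagonal _ _).eq
  · have h := (permPartHom_eq_one_iff hmono (⟨g, hg⟩ * ⟨a, ha⟩ * ⟨g, hg⟩⁻¹)).mp
      (by rw [map_mul, map_mul, (permPartHom_eq_one_iff hmono ⟨a, ha⟩).mpr hda, mul_one,
        map_inv, mul_inv_cancel])
    rwa [Subgroup.coe_mul, Subgroup.coe_mul, Subgroup.coe_inv] at h
  · have : (B.subgroupOf G).Normal := ⟨fun n hn g => hBnorm g g.2 n hn⟩
    have hle := le_ker_permPartHom (by simpa using hp) hmono hirr (B.subgroupOf G)
      (fun x hx y hy => Subtype.ext (hBab _ hx _ hy))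
      (fun a ha => hBdiag a a.2 ((permPartHom_eq_one_iff hmono a).mp ha))
    exact (permPartHom_eq_one_iff hmono ⟨b, hBG hb⟩).mp (hle hb)

/-- If `G` is a finite irreducible monomial subgroup of `GL(p,ℂ)`, then the diagonal
subgroup `G ∩ D(p,ℂ)` is a maximal abelian normal subgroup of `G`: it is abelian,
normal in `G`, and any abelian normal subgroup of `G` containing it consists of
diagonal matrices (hence equals it). -/
theorem diagonal_subgroup_maximal_abelian_normal
    {p : ℕ} (hp : p.Prime)
    (G : Subgroup (Matrix.GeneralLinearGroup (Fin p) ℂ)) (hfin : Finite G)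
    (hmono : ∀ g ∈ G, IsMonomial (g : Matrix (Fin p) (Fin p) ℂ))
    (hirr : ∀ W : Submodule ℂ (Fin p → ℂ),
      (∀ g ∈ G, ∀ v ∈ W, Matrix.mulVec (g : Matrix (Fin p) (Fin p) ℂ) v ∈ W) →
      W = ⊥ ∨ W = ⊤) :
    (∀ a ∈ G, ∀ b ∈ G, Matrix.IsDiag (a : Matrix (Fin p) (Fin p) ℂ) →
      Matrix.IsDiag (b : Matrix (Fin p) (Fin p) ℂ) → a * b = b * a) ∧
    (∀ g ∈ G, ∀ a ∈ G, Matrix.IsDiag (a : Matrix (Fin p) (Fin p) ℂ) →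
      Matrix.IsDiag ((g * a * g⁻¹ : Matrix.GeneralLinearGroup (Fin p) ℂ) :
        Matrix (Fin p) (Fin p) ℂ)) ∧
    (∀ B : Subgroup (Matrix.GeneralLinearGroup (Fin p) ℂ), B ≤ G →
      (∀ x ∈ B, ∀ y ∈ B, x * y = y * x) →
      (∀ g ∈ G, ∀ b ∈ B, g * b * g⁻¹ ∈ B) →
      (∀ a ∈ G, Matrix.IsDiag (a : Matrix (Fin p) (Fin p) ℂ) → a ∈ B) →
      ∀ b ∈ B, Matrix.IsDiag (b : Matrix (Fin p) (Fin p) ℂ)) :=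
  diagonal_subgroup_maximal_abelian_normal_general hp G hmono hirr
end

section
/- Let p be a prime and let X be the group of all p-tuples (a_1,…,a_p) of complex roots of unity of p-power order with a_1·a_2·⋯·a_p = 1 (under componentwise multiplication), equipped with the cyclic shift action of the p-cycle s = (1,2,…,p). Then X is a uniserial ⟨s⟩-module: for every integer j ≥ 0 there is exactly one shift-invariant subgroup of X of order p^j, every finite shift-invariant subgroup of X has order p^j for some j ≥ 0, and consequently the finite shift-invariant subgroups of X form a chain under inclusion. -/
/-- Membership in the group `X` of `p`-tuples of complex roots of unity of `p`-power
order whose product is `1`. -/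
def MemXGroup (p : ℕ) (a : Fin p → ℂˣ) : Prop :=
  (∀ i, ∃ k : ℕ, a i ^ (p ^ k) = 1) ∧ (∏ i, a i) = 1

/-- A subgroup `B` of the ambient group of tuples is invariant under the cyclic
shift induced by the `p`-cycle `s = (1,2,…,p)`. -/
def ShiftInvariant (p : ℕ) (B : Subgroup (Fin p → ℂˣ)) : Prop :=
  ∀ a ∈ B, (fun i => a (finRotate p i)) ∈ B

/-!
Write `s` for the cyclic shift and `D a = s a / a`, i.e. `D = s - 1`; a subgroup is `s`-invariant
iff it is `D`-invariant. On `X`, `D` is surjective (a tuple with product `1` is `D` of its partial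
products, corrected by a constant `p`-th root), its kernel is the diagonal copy of `μ_p`, and it is
locally nilpotent, because `s ^ p = 1` forces `(s - 1) ^ p ∈ p ℤ[s]`.

Hence `X_j = X ∩ ker D ^ j` has order `p ^ j`, as `D` maps `X_(j+1)` onto `X_j` with kernel `X_1`.
A nontrivial finite invariant `B ≤ X` meets `X_1` (in the last nontrivial `D`-iterate of any of its
elements), so contains it, `X_1` having prime order. Then `D B` has order `|B| / p` and equals some
`X_m` by induction, and `B = X_(m+1)` because `B ≤ X_(m+1)` and both have order `p ^ (m+1)`.
-/

open Function CommGroup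

namespace Subgroup

variable {G H : Type*} [Group G] [Group H]

theorem card_eq_card_inf_ker_mul_card_map (B : Subgroup G) (f : G →* H) :
    Nat.card B = Nat.card ↥(f.ker ⊓ B) * Nat.card (B.map f) := by
  rw [← relIndex_ker, ← inf_relIndex_right,
    ← Nat.card_congr (subgroupOfEquivOfLe (inf_le_right : f.ker ⊓ B ≤ B)).toEquiv]
  exact ((f.ker ⊓ B).subgroupOf B).card_mul_index.symm

variable (X : Subgroup G) (φ : G →* G)

def kerFiltration (j : ℕ) : Subgroup G where
  carrier := {a | a ∈ X ∧ φ^[j] a = 1}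
  one_mem' := ⟨X.one_mem, iterate_map_one φ j⟩
  mul_mem' ha hb := ⟨X.mul_mem ha.1 hb.1, by rw [iterate_map_mul, ha.2, hb.2, one_mul]⟩
  inv_mem' ha := ⟨X.inv_mem ha.1, by rw [iterate_map_inv, ha.2, inv_one]⟩

variable {X φ}

theorem mem_kerFiltration {j : ℕ} {a : G} :
    a ∈ kerFiltration X φ j ↔ a ∈ X ∧ φ^[j] a = 1 := Iff.rfl

theorem kerFiltration_le (j : ℕ) : kerFiltration X φ j ≤ X := fun _ ha => ha.1

theorem kerFiltration_zero : kerFiltration X φ 0 = ⊥ := by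
  ext a
  simp only [mem_kerFiltration, iterate_zero_apply, mem_bot]
  exact ⟨And.right, fun h => ⟨h ▸ X.one_mem, h⟩⟩

theorem kerFiltration_mono : Monotone (kerFiltration X φ) := by
  intro j k hjk a ha
  rw [mem_kerFiltration] at ha ⊢
  rw [← Nat.sub_add_cancel hjk, iterate_add_apply, ha.2, iterate_map_one]
  exact ⟨ha.1, rfl⟩

theorem mem_kerFiltration_succ (hX : X.map φ ≤ X) {j : ℕ} {a : G} :
    a ∈ kerFiltration X φ (j + 1) ↔ a ∈ X ∧ φ a ∈ kerFiltration X φ j := by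
  simp only [mem_kerFiltration, iterate_succ_apply]
  exact ⟨fun h => ⟨h.1, hX (mem_map_of_mem φ h.1), h.2⟩, fun h => ⟨h.1, h.2.2⟩⟩

theorem map_kerFiltration_le (hX : X.map φ ≤ X) (j : ℕ) :
    (kerFiltration X φ j).map φ ≤ kerFiltration X φ j := by
  rintro _ ⟨a, ha, rfl⟩
  rw [SetLike.mem_coe, mem_kerFiltration] at ha
  rw [mem_kerFiltration, ← iterate_succ_apply, iterate_succ_apply', ha.2, map_one]
  exact ⟨hX (mem_map_of_mem φ ha.1), rfl⟩

theorem map_kerFiltration_succ (hX : X.map φ = X) (j : ℕ) :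
    (kerFiltration X φ (j + 1)).map φ = kerFiltration X φ j := by
  refine le_antisymm ?_ fun b hb => ?_
  · rintro _ ⟨a, ha, rfl⟩
    exact ((mem_kerFiltration_succ hX.le).mp ha).2
  · obtain ⟨a, haX, rfl⟩ := (hX.symm ▸ (mem_kerFiltration.mp hb).1 : b ∈ X.map φ)
    exact mem_map_of_mem φ ((mem_kerFiltration_succ hX.le).mpr ⟨haX, hb⟩)

theorem ker_inf_eq_kerFiltration_one {B : Subgroup G} (hBX : B ≤ X)
    (hB : kerFiltration X φ 1 ≤ B) : φ.ker ⊓ B = kerFiltration X φ 1 :=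
  le_antisymm (fun _ ha => ⟨hBX ha.2, ha.1⟩) fun _ ha => ⟨ha.2, hB ha⟩

theorem card_kerFiltration (hX : X.map φ = X) (j : ℕ) :
    Nat.card (kerFiltration X φ j) = Nat.card (kerFiltration X φ 1) ^ j := by
  induction j with
  | zero => rw [kerFiltration_zero, card_bot, pow_zero]
  | succ j ih =>
    rw [card_eq_card_inf_ker_mul_card_map _ φ,
      ker_inf_eq_kerFiltration_one (kerFiltration_le _) (kerFiltration_mono (Nat.le_add_left 1 j)),
      map_kerFiltration_succ hX, ih, pow_succ']

theorem exists_iterate_ne_one_and_map_eq_one {a : G} (ha : a ≠ 1) {k : ℕ} (hk : φ^[k] a = 1) :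
    ∃ j, φ^[j] a ≠ 1 ∧ φ (φ^[j] a) = 1 := by
  induction k generalizing a with
  | zero => exact absurd hk ha
  | succ k ih =>
    by_cases hφa : φ a = 1
    · exact ⟨0, ha, hφa⟩
    · obtain ⟨j, hj⟩ := ih hφa hk
      exact ⟨j + 1, hj⟩

theorem kerFiltration_one_le (hp : (Nat.card (kerFiltration X φ 1)).Prime)
    (hnil : ∀ a ∈ X, ∃ k, φ^[k] a = 1) {B : Subgroup G} (hBX : B ≤ X) (hB : B.map φ ≤ B)
    (hne : B ≠ ⊥) : kerFiltration X φ 1 ≤ B := by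
  obtain ⟨a, haB, ha⟩ := B.bot_or_exists_ne_one.resolve_left hne
  obtain ⟨k, hk⟩ := hnil a (hBX haB)
  obtain ⟨j, hj, hφj⟩ := exists_iterate_ne_one_and_map_eq_one ha hk
  have hjB : φ^[j] a ∈ B := Set.MapsTo.iterate (fun b hb => hB (mem_map_of_mem φ hb)) j haB
  have hmem : φ^[j] a ∈ B ⊓ kerFiltration X φ 1 := ⟨hjB, hBX hjB, hφj⟩
  have : Finite (kerFiltration X φ 1) := Nat.finite_of_card_ne_zero hp.ne_zero
  rcases hp.eq_one_or_self_of_dvd _ (card_dvd_of_le (inf_le_right : B ⊓ _ ≤ _)) with h | h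
  · rw [card_eq_one.mp h, mem_bot] at hmem
    exact absurd hmem hj
  · exact inf_eq_right.mp (eq_of_le_of_card_ge inf_le_right h.ge)

theorem exists_eq_kerFiltration (hX : X.map φ = X) (hp : (Nat.card (kerFiltration X φ 1)).Prime)
    (hnil : ∀ a ∈ X, ∃ k, φ^[k] a = 1) {B : Subgroup G} [Finite B] (hBX : B ≤ X)
    (hB : B.map φ ≤ B) : ∃ j, B = kerFiltration X φ j := by
  obtain ⟨n, hn⟩ : ∃ n, Nat.card B = n := ⟨_, rfl⟩
  induction n using Nat.strong_induction_on generalizing B with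
  | _ n ih =>
    rcases eq_or_ne B ⊥ with rfl | hne
    · exact ⟨0, kerFiltration_zero.symm⟩
    have hcard : Nat.card B = Nat.card (kerFiltration X φ 1) * Nat.card (B.map φ) := by
      rw [card_eq_card_inf_ker_mul_card_map B φ,
        ker_inf_eq_kerFiltration_one hBX (kerFiltration_one_le hp hnil hBX hB hne)]
    have : Finite (B.map φ) := by rw [← SetLike.coe_sort_coe, coe_map]; infer_instance
    have hlt : Nat.card (B.map φ) < n :=
      hn ▸ hcard ▸ (Nat.lt_mul_iff_one_lt_left Nat.card_pos).mpr hp.one_lt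
    obtain ⟨m, hm⟩ := ih _ hlt (hX ▸ map_mono hBX) (map_mono hB) rfl
    have : Finite (kerFiltration X φ (m + 1)) :=
      Nat.finite_of_card_ne_zero (by rw [card_kerFiltration hX]; exact pow_ne_zero _ hp.ne_zero)
    refine ⟨m + 1, eq_of_le_of_card_ge (fun a ha => ?_) ?_⟩
    · exact (mem_kerFiltration_succ hX.le).mpr ⟨hBX ha, hm ▸ mem_map_of_mem φ ha⟩
    · rw [card_kerFiltration hX (m + 1), hcard, hm, card_kerFiltration hX m, pow_succ']

end Subgroup

theorem exists_sub_one_pow_prime_eq_mul {R : Type*} [Ring R] {p : ℕ} (hp : p.Prime) {s : R}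
    (hs : s ^ p = 1) : ∃ u : R, (s - 1) ^ p = p * u := by
  obtain ⟨r, hr⟩ := ((Commute.one_right s).neg_right).exists_add_pow_prime_eq hp
  rw [← sub_eq_add_neg, hs] at hr
  rcases hp.eq_two_or_odd' with rfl | hodd
  · exact ⟨1 - s * r, by rw [hr]; push_cast; noncomm_ring⟩
  · exact ⟨-(s * r), by rw [hr, hodd.neg_one_pow]; noncomm_ring⟩

theorem AddMonoid.End.sub_one_pow_mul_apply_eq_zero {M : Type*} [AddCommGroup M] {p : ℕ}
    (hp : p.Prime) {s : AddMonoid.End M} (hs : s ^ p = 1) {x : M} {K : ℕ} (hx : p ^ K • x = 0) :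
    ((s - 1) ^ (p * K)) x = 0 := by
  obtain ⟨u, hu⟩ := exists_sub_one_pow_prime_eq_mul hp hs
  rw [pow_mul, hu, (Nat.cast_commute p u).mul_pow, ← Nat.cast_pow, (Nat.cast_commute _ _).eq,
    coe_mul, comp_apply, natCast_apply, hx, map_zero]

theorem MonoidHom.iterate_div_id_apply_eq_one {G : Type*} [CommGroup G] {p : ℕ} (hp : p.Prime)
    {σ : G →* G} (hσ : ∀ a, σ^[p] a = a) {a : G} {K : ℕ} (ha : a ^ p ^ K = 1) :
    (⇑(σ / MonoidHom.id G))^[p * K] a = 1 := by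
  -- in the ring `AddMonoid.End (Additive G)` the map `σ / id` becomes `S - 1`
  let S := monoidEndToAdditive G σ
  let D : Monoid.End G := σ / MonoidHom.id G
  have hS : S ^ p = 1 := by
    ext x
    exact hσ x
  have hD : monoidEndToAdditive G D = S - 1 := rfl
  have := AddMonoid.End.sub_one_pow_mul_apply_eq_zero hp hS (x := Additive.ofMul a) (K := K)
    (by rw [← ofMul_pow, ha, ofMul_one])
  rw [← hD, ← map_pow] at this
  exact this

theorem Fin.partialProd_last {M : Type*} [CommMonoid M] {n : ℕ} (f : Fin n → M) :
    partialProd f (last n) = ∏ i, f i := by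
  rw [partialProd, val_last, List.take_of_length_le (by simp), List.prod_ofFn]

theorem Fin.partialProd_mem {G : Type*} [Group G] {n : ℕ} {H : Subgroup G} {f : Fin n → G}
    (hf : ∀ i, f i ∈ H) (i : Fin (n + 1)) : partialProd f i ∈ H := by
  induction i using Fin.induction with
  | zero => rw [partialProd_zero]; exact H.one_mem
  | succ i ih => rw [partialProd_succ]; exact H.mul_mem ih (hf i)

theorem Fin.partialProd_init_finRotate_div {G : Type*} [CommGroup G] {n : ℕ}
    {b : Fin (n + 1) → G} (hb : ∏ i, b i = 1) (i : Fin (n + 1)) :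
    partialProd (init b) (finRotate (n + 1) i) / partialProd (init b) i = b i := by
  induction i using Fin.lastCases with
  | last =>
    rw [prod_univ_castSucc] at hb
    rw [finRotate_last, partialProd_zero, partialProd_last, one_div]
    exact (eq_inv_of_mul_eq_one_right hb).symm
  | cast i =>
    rw [finRotate_apply, coeSucc_eq_succ, partialProd_succ, mul_div_cancel_left]
    rfl

theorem Fin.eq_const_of_comp_finRotate {α : Type*} {n : ℕ} {a : Fin (n + 1) → α}
    (h : a ∘ finRotate (n + 1) = a) : a = const _ (a 0) := by
  funext i
  induction i using Fin.induction with
  | zero => rfl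
  | succ i ih => rw [← coeSucc_eq_succ, ← finRotate_apply]; exact (congrFun h _).trans ih

theorem finRotate_pow_self {n : ℕ} (hn : 2 ≤ n) : finRotate n ^ n = 1 := by
  have h : orderOf (finRotate n) = n := by
    rw [(isCycle_finRotate_of_le hn).orderOf, support_finRotate_of_le hn, Finset.card_univ,
      Fintype.card_fin]
  exact (congrArg (finRotate n ^ ·) h.symm).trans (pow_orderOf_eq_one _)

theorem CommGroup.pi_primaryComponent_le {ι G : Type*} [Fintype ι] [CommGroup G] (p : ℕ) :
    Subgroup.pi Set.univ (fun _ : ι => primaryComponent G p) ≤ primaryComponent (ι → G) p := by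
  intro a ha
  choose k hk using fun i => ha i (Set.mem_univ i)
  refine ⟨∑ i, k i, funext fun i => ?_⟩
  obtain ⟨c, hc⟩ :=
    pow_dvd_pow p (Finset.single_le_sum (fun j _ => (k j).zero_le) (Finset.mem_univ i))
  rw [Pi.pow_apply, hc, pow_mul, hk i, one_pow, Pi.one_apply]

theorem IsAlgClosed.exists_pow_eq_of_mem_primaryComponent {K : Type*} [Field K] [IsAlgClosed K]
    {p : ℕ} (hp : p ≠ 0) {z : Kˣ} (hz : z ∈ primaryComponent Kˣ p) :
    ∃ t ∈ primaryComponent Kˣ p, t ^ p = z := by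
  obtain ⟨t, ht⟩ := IsAlgClosed.exists_pow_nat_eq (z : K) (Nat.pos_of_ne_zero hp)
  have ht0 : t ≠ 0 := by
    rintro rfl
    exact z.ne_zero (by rw [← ht, zero_pow hp])
  have htz : Units.mk0 t ht0 ^ p = z := Units.ext (by simpa using ht)
  obtain ⟨k, hk⟩ := hz
  exact ⟨Units.mk0 t ht0, ⟨k + 1, by rw [pow_succ', pow_mul, htz, hk]⟩, htz⟩

namespace NormOneTuples

variable (p : ℕ)

def primaryTuples : Subgroup (Fin p → ℂˣ) :=
  Subgroup.pi Set.univ fun _ => primaryComponent ℂˣ p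

def normOneTuples : Subgroup (Fin p → ℂˣ) :=
  primaryTuples p ⊓ (∏ i, Pi.evalMonoidHom (fun _ : Fin p => ℂˣ) i).ker

theorem mem_normOneTuples {a : Fin p → ℂˣ} : a ∈ normOneTuples p ↔ MemXGroup p a := by
  simp [normOneTuples, primaryTuples, MemXGroup, Subgroup.mem_pi]

def shift : (Fin p → ℂˣ) →* (Fin p → ℂˣ) :=
  MulDistribMulAction.toMonoidHom _ (DomMulAct.mk (finRotate p))

def shiftDiff : (Fin p → ℂˣ) →* (Fin p → ℂˣ) := shift p / MonoidHom.id _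

theorem shiftDiff_apply (a : Fin p → ℂˣ) : shiftDiff p a = shift p a / a := rfl

theorem shiftDiff_eq_one_iff {a : Fin p → ℂˣ} : shiftDiff p a = 1 ↔ a ∘ finRotate p = a :=
  div_eq_one

theorem shiftDiff_const (c : ℂˣ) : shiftDiff p (const _ c) = 1 :=
  (shiftDiff_eq_one_iff p).mpr rfl

theorem shift_iterate_self (hp : 2 ≤ p) (a : Fin p → ℂˣ) : (shift p)^[p] a = a := by
  change (DomMulAct.mk (finRotate p) • ·)^[p] a = a
  rw [smul_iterate, ← DomMulAct.mk_pow, finRotate_pow_self hp, DomMulAct.mk_one]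
  exact one_smul _ a

variable {p}

theorem shiftInvariant_iff_map_shiftDiff_le {B : Subgroup (Fin p → ℂˣ)} :
    ShiftInvariant p B ↔ B.map (shiftDiff p) ≤ B := by
  refine ⟨?_, fun h a ha => ?_⟩
  · rintro hs _ ⟨a, ha, rfl⟩
    exact B.div_mem (hs a ha) ha
  · have := B.mul_mem (h (Subgroup.mem_map_of_mem _ ha)) ha
    rwa [shiftDiff_apply, div_mul_cancel] at this

theorem shift_mem {a : Fin p → ℂˣ} (ha : a ∈ normOneTuples p) : shift p a ∈ normOneTuples p := by
  rw [mem_normOneTuples] at ha ⊢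
  exact ⟨fun i => ha.1 _, (Equiv.prod_comp (finRotate p) a).trans ha.2⟩

theorem map_shiftDiff_normOneTuples_le : (normOneTuples p).map (shiftDiff p) ≤ normOneTuples p :=
  shiftInvariant_iff_map_shiftDiff_le.mp fun _ => shift_mem

theorem map_shiftDiff_normOneTuples (hp : p ≠ 0) :
    (normOneTuples p).map (shiftDiff p) = normOneTuples p := by
  refine le_antisymm map_shiftDiff_normOneTuples_le fun b hb => ?_
  obtain ⟨n, rfl⟩ := Nat.exists_eq_succ_of_ne_zero hp
  rw [mem_normOneTuples] at hb
  set g := Fin.partialProd (Fin.init b)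
  have hg : ∀ i, g i ∈ primaryComponent ℂˣ (n + 1) := Fin.partialProd_mem fun _ => hb.1 _
  obtain ⟨t, ht, htg⟩ : ∃ t ∈ primaryComponent ℂˣ (n + 1), t ^ (n + 1) = (∏ i, g i)⁻¹ :=
    IsAlgClosed.exists_pow_eq_of_mem_primaryComponent hp
      (Subgroup.inv_mem _ (Subgroup.prod_mem _ fun i _ => hg i))
  refine ⟨const (Fin (n + 1)) t * g,
    (mem_normOneTuples _).mpr ⟨fun i => Subgroup.mul_mem _ ht (hg i), ?_⟩, ?_⟩
  · simp only [Pi.mul_apply, const_apply]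
    rw [Finset.prod_mul_distrib, Finset.prod_const, Finset.card_univ, Fintype.card_fin, htg,
      inv_mul_cancel]
  · rw [map_mul, shiftDiff_const, one_mul]
    exact funext (Fin.partialProd_init_finRotate_div hb.2)

theorem kerFiltration_one_eq (hp : p ≠ 0) :
    (normOneTuples p).kerFiltration (shiftDiff p) 1 =
      (rootsOfUnity p ℂ).map (Pi.constMonoidHom (Fin p) ℂˣ) := by
  ext a
  constructor
  · rintro ⟨ha, hD⟩
    obtain ⟨n, rfl⟩ := Nat.exists_eq_succ_of_ne_zero hp
    have hconst := Fin.eq_const_of_comp_finRotate ((shiftDiff_eq_one_iff _).mp hD)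
    refine ⟨a 0, ?_, hconst.symm⟩
    have hprod := ((mem_normOneTuples _).mp ha).2
    rw [hconst] at hprod
    simpa [mem_rootsOfUnity] using hprod
  · rintro ⟨c, hc, rfl⟩
    replace hc := (mem_rootsOfUnity p c).mp hc
    exact ⟨(mem_normOneTuples p).mpr ⟨fun _ => ⟨1, by simpa using hc⟩, by simpa using hc⟩,
      shiftDiff_const p c⟩

theorem card_kerFiltration_one [NeZero p] :
    Nat.card ((normOneTuples p).kerFiltration (shiftDiff p) 1) = p := by
  rw [kerFiltration_one_eq (NeZero.ne p), Subgroup.card_map_of_injective const_injective,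
    Complex.card_rootsOfUnity]

theorem card_kerFiltration [NeZero p] (j : ℕ) :
    Nat.card ((normOneTuples p).kerFiltration (shiftDiff p) j) = p ^ j := by
  rw [Subgroup.card_kerFiltration (map_shiftDiff_normOneTuples (NeZero.ne p)),
    card_kerFiltration_one]

theorem shiftInvariant_kerFiltration (j : ℕ) :
    ShiftInvariant p ((normOneTuples p).kerFiltration (shiftDiff p) j) :=
  shiftInvariant_iff_map_shiftDiff_le.mpr
    (Subgroup.map_kerFiltration_le map_shiftDiff_normOneTuples_le j)

theorem exists_iterate_shiftDiff_eq_one (hp : p.Prime) {a : Fin p → ℂˣ}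
    (ha : a ∈ normOneTuples p) : ∃ k, (shiftDiff p)^[k] a = 1 := by
  obtain ⟨K, hK⟩ := pi_primaryComponent_le p ha.1
  exact ⟨p * K, MonoidHom.iterate_div_id_apply_eq_one hp (shift_iterate_self p hp.two_le) hK⟩

theorem exists_eq_kerFiltration (hp : p.Prime) {B : Subgroup (Fin p → ℂˣ)} [Finite B]
    (hBX : B ≤ normOneTuples p) (hB : ShiftInvariant p B) :
    ∃ j, B = (normOneTuples p).kerFiltration (shiftDiff p) j :=
  have : NeZero p := ⟨hp.ne_zero⟩
  Subgroup.exists_eq_kerFiltration (map_shiftDiff_normOneTuples hp.ne_zero)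
    ((card_kerFiltration_one (p := p)).symm ▸ hp) (fun _ => exists_iterate_shiftDiff_eq_one hp)
    hBX (shiftInvariant_iff_map_shiftDiff_le.mp hB)

end NormOneTuples

open NormOneTuples

/-- The group `X` of `p`-tuples of `p`-power roots of unity with product `1` is a
uniserial module for the cyclic shift: for every `j` there is a unique shift-invariant
subgroup of `X` of order `p^j`; every finite shift-invariant subgroup of `X` has order
`p^j` for some `j`; and the finite shift-invariant subgroups of `X` form a chain. -/
theorem pPower_norm_one_tuples_uniserial (p : ℕ) (hp : p.Prime) :
    (∀ j : ℕ, ∃! B : Subgroup (Fin p → ℂˣ),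
      ((∀ a ∈ B, MemXGroup p a) ∧ ShiftInvariant p B) ∧ Nat.card B = p ^ j) ∧
    (∀ B : Subgroup (Fin p → ℂˣ), (∀ a ∈ B, MemXGroup p a) → ShiftInvariant p B →
      (B : Set (Fin p → ℂˣ)).Finite → ∃ j : ℕ, Nat.card B = p ^ j) ∧
    (∀ B C : Subgroup (Fin p → ℂˣ),
      (∀ a ∈ B, MemXGroup p a) → ShiftInvariant p B → (B : Set (Fin p → ℂˣ)).Finite →
      (∀ a ∈ C, MemXGroup p a) → ShiftInvariant p C → (C : Set (Fin p → ℂˣ)).Finite →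
      B ≤ C ∨ C ≤ B) := by
  have : NeZero p := ⟨hp.ne_zero⟩
  set F := (normOneTuples p).kerFiltration (shiftDiff p)
  have hF (j : ℕ) :
      ((∀ a ∈ F j, MemXGroup p a) ∧ ShiftInvariant p (F j)) ∧ Nat.card (F j) = p ^ j :=
    ⟨⟨fun _ ha => (mem_normOneTuples p).mp ha.1, shiftInvariant_kerFiltration j⟩,
      card_kerFiltration j⟩
  have classify (B : Subgroup (Fin p → ℂˣ)) (hBX : ∀ a ∈ B, MemXGroup p a)
      (hB : ShiftInvariant p B) (hfin : (B : Set (Fin p → ℂˣ)).Finite) : ∃ j, B = F j :=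
    have := hfin.to_subtype
    exists_eq_kerFiltration hp (fun a ha => (mem_normOneTuples p).mpr (hBX a ha)) hB
  refine ⟨fun j => ⟨F j, hF j, fun B hB => ?_⟩, fun B hBX hB hfin => ?_,
    fun B C hBX hB hBfin hCX hC hCfin => ?_⟩
  · have : Finite B := Nat.finite_of_card_ne_zero (hB.2 ▸ pow_ne_zero j hp.ne_zero)
    obtain ⟨m, rfl⟩ := classify B hB.1.1 hB.1.2 (Set.toFinite _)
    rw [Nat.pow_right_injective hp.two_le ((hF m).2.symm.trans hB.2)]
  · obtain ⟨m, rfl⟩ := classify B hBX hB hfin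
    exact ⟨m, (hF m).2⟩
  · obtain ⟨m, rfl⟩ := classify B hBX hB hBfin
    obtain ⟨n, rfl⟩ := classify C hCX hC hCfin
    exact (le_total m n).imp (fun h => Subgroup.kerFiltration_mono h)
      fun h => Subgroup.kerFiltration_mono h
end

section
/- Let q be a prime and let f be a monic polynomial over the q-adic integers ℤ_q. Suppose that the reduction of f modulo q factorizes as f̄ = g₀·h₀ where g₀ and h₀ are coprime monic polynomials over 𝔽_q. Then there exist monic polynomials g and h over ℤ_q such that the reduction of g modulo q equals g₀, the reduction of h modulo q equals h₀, and f = g·h. -/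
/-!
Newton iteration. Monic lifts `G, H` of `g₀, h₀` factor `f` modulo `q`. If `f - G H = qᵏ E`,
solve `u g₀ + v h₀ = Ē` over `𝔽_q` with `deg u < deg h₀`, `deg v < deg g₀` (possible since `g₀`,
`h₀` are coprime and `deg Ē < deg g₀ + deg h₀`), lift `u, v` to `U, V` of the same degrees and
replace `G, H` by `G + qᵏ V, H + qᵏ U`: these are still monic lifts of `g₀, h₀`, and they factor
`f` modulo `qᵏ⁺¹`. The successive approximations are `q`-adically Cauchy, so they converge
coefficientwise in `ℤ_q`, and the limits factor `f` exactly.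
-/

open Polynomial

theorem exists_seq_of_exists_succ {α : Type*} {P : ℕ → α → Prop} {Q : ℕ → α → α → Prop}
    (h0 : ∃ a, P 0 a) (hs : ∀ k a, P k a → ∃ b, P (k + 1) b ∧ Q k a b) :
    ∃ s : ℕ → α, ∀ k, P k (s k) ∧ Q k (s k) (s (k + 1)) := by
  obtain ⟨a, ha⟩ := h0
  choose! next hnext using hs
  let s : ℕ → α := fun k ↦ Nat.rec a next k
  have hP (k : ℕ) : P k (s k) := by
    induction k with
    | zero => exact ha
    | succ k ih => exact (hnext k _ ih).1
  exact ⟨s, fun k ↦ ⟨hP k, (hnext k _ (hP k)).2⟩⟩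

variable {R S : Type*} [CommRing R] [CommRing S] {φ : R →+* S} {ϖ : R}

theorem smodEq_span_singleton_pow_iff {x y : R} {k : ℕ} :
    x ≡ y [SMOD (Ideal.span {ϖ} ^ k • ⊤ : Submodule R R)] ↔ ϖ ^ k ∣ x - y := by
  rw [← Ideal.one_eq_top, smul_eq_mul, mul_one, SModEq.sub_mem, Ideal.span_singleton_pow,
    Ideal.mem_span_singleton]

theorem eq_of_forall_pow_dvd_sub [IsHausdorff (Ideal.span {ϖ}) R] {x y : R}
    (h : ∀ k, ϖ ^ k ∣ x - y) : x = y :=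
  IsHausdorff.eq_iff_smodEq.mpr fun k ↦ smodEq_span_singleton_pow_iff.mpr (h k)

theorem exists_forall_pow_dvd_sub [IsPrecomplete (Ideal.span {ϖ}) R] {c : ℕ → R}
    (hc : ∀ k, ϖ ^ k ∣ c (k + 1) - c k) : ∃ L, ∀ k, ϖ ^ k ∣ L - c k := by
  have cauchy {m n : ℕ} (hmn : m ≤ n) : ϖ ^ m ∣ c n - c m := by
    induction n, hmn using Nat.le_induction with
    | base => simp
    | succ n hmn ih =>
      rw [← sub_add_sub_cancel]
      exact dvd_add ((pow_dvd_pow ϖ hmn).trans (hc n)) ih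
  obtain ⟨L, hL⟩ := IsPrecomplete.prec inferInstance fun {m n} hmn ↦
    smodEq_span_singleton_pow_iff.mpr (dvd_sub_comm.mp (cauchy hmn))
  exact ⟨L, fun k ↦ dvd_sub_comm.mp (smodEq_span_singleton_pow_iff.mp (hL k))⟩

namespace Polynomial

theorem eq_of_forall_C_pow_dvd_sub [IsHausdorff (Ideal.span {ϖ}) R] {p p' : R[X]}
    (h : ∀ k, C (ϖ ^ k) ∣ p - p') : p = p' :=
  ext fun i ↦ eq_of_forall_pow_dvd_sub fun k ↦ by
    simpa using (C_dvd_iff_dvd_coeff _ _).mp (h k) i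

theorem exists_forall_C_pow_dvd_sub [IsPrecomplete (Ideal.span {ϖ}) R] {c : ℕ → R[X]} {N : ℕ}
    (hdeg : ∀ k, (c k).natDegree ≤ N) (hc : ∀ k, C (ϖ ^ k) ∣ c (k + 1) - c k) :
    ∃ p : R[X], p.natDegree ≤ N ∧ ∀ k, C (ϖ ^ k) ∣ p - c k := by
  choose L hL using fun i ↦ exists_forall_pow_dvd_sub (c := fun k ↦ (c k).coeff i) fun k ↦ by
    simpa using (C_dvd_iff_dvd_coeff _ _).mp (hc k) i
  refine ⟨∑ i ∈ Finset.range (N + 1), monomial i (L i), ?_, fun k ↦ ?_⟩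
  · exact natDegree_sum_le_of_forall_le _ _ fun i hi ↦
      (natDegree_monomial_le _).trans (Nat.lt_succ_iff.mp (Finset.mem_range.mp hi))
  · rw [C_dvd_iff_dvd_coeff]
    intro i
    simp only [coeff_sub, finsetSum_coeff, coeff_monomial, Finset.sum_ite_eq', Finset.mem_range]
    split_ifs with hi
    · exact hL i k
    · rw [coeff_eq_zero_of_natDegree_lt ((hdeg k).trans_lt (by lia)), sub_zero]
      exact dvd_zero _

theorem exists_monic_forall_C_pow_dvd_sub [IsAdicComplete (Ideal.span {ϖ}) R] {c : ℕ → R[X]}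
    {N : ℕ} (hmonic : ∀ k, (c k).Monic) (hdeg : ∀ k, (c k).natDegree = N)
    (hc : ∀ k, C (ϖ ^ k) ∣ c (k + 1) - c k) :
    ∃ p : R[X], p.Monic ∧ ∀ k, C (ϖ ^ k) ∣ p - c k := by
  obtain ⟨p, hpN, hp⟩ := exists_forall_C_pow_dvd_sub (fun k ↦ (hdeg k).le) hc
  refine ⟨p, monic_of_natDegree_le_of_coeff_eq_one N hpN ?_, hp⟩
  refine eq_of_forall_pow_dvd_sub (ϖ := ϖ) fun k ↦ ?_
  have := (C_dvd_iff_dvd_coeff _ _).mp (hp k) N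
  rwa [coeff_sub, ← hdeg k, (hmonic k).coeff_natDegree, hdeg k] at this

/-- Reducing the cofactor modulo `P` is what bounds its degree: `a` may be a zero divisor. -/
theorem exists_eq_C_mul_of_degree_lt [Nontrivial R] {P p : R[X]} (hP : P.Monic)
    (hp : p.degree < P.degree) {a : R} (h : C a ∣ p) : ∃ e, p = C a * e ∧ e.degree < P.degree := by
  obtain ⟨e, rfl⟩ := h
  refine ⟨e %ₘ P, ?_, degree_modByMonic_lt e hP⟩
  have hdvd : P ∣ C a * e - C a * (e %ₘ P) :=
    ⟨C a * (e /ₘ P), by linear_combination -C a * modByMonic_add_div e P⟩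
  have hdeg : (C a * e - C a * (e %ₘ P)).degree < P.degree := by
    refine (degree_sub_le _ _).trans_lt (max_lt hp ?_)
    rw [C_mul']
    exact (degree_smul_le _ _).trans_lt (degree_modByMonic_lt e hP)
  by_contra hne
  exact hP.not_dvd_of_degree_lt (sub_ne_zero.mpr hne) hdeg hdvd

theorem Monic.add_C_mul_of_degree_lt {G V : R[X]} (hG : G.Monic) (hV : V.degree < G.degree)
    (a : R) : (G + C a * V).Monic := by
  refine hG.add_of_left (lt_of_le_of_lt ?_ hV)
  rw [C_mul']
  exact degree_smul_le _ _

theorem exists_mul_add_mul_eq_of_isCoprime [Nontrivial S] {g h e : S[X]} (hg : g.Monic)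
    (hh : h.Monic) (hgh : IsCoprime g h) (he : e.degree < (g * h).degree) :
    ∃ u v : S[X], u * g + v * h = e ∧ u.degree < h.degree ∧ v.degree < g.degree := by
  obtain ⟨a, b, hab⟩ := hgh
  set v := (b * e) %ₘ g
  set u := a * e + (b * e /ₘ g) * h
  have huv : u * g + v * h = e := by
    linear_combination e * hab + h * modByMonic_add_div (b * e) g
  have hv : v.degree < g.degree := degree_modByMonic_lt _ hg
  refine ⟨u, v, huv, lt_of_not_ge fun hhu ↦ ?_, hv⟩
  have hug : (u * g).degree < (h * g).degree := by
    rw [eq_sub_of_add_eq huv, mul_comm h g]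
    refine (degree_sub_le _ _).trans_lt (max_lt he ?_)
    rw [hh.degree_mul, hh.degree_mul]
    exact WithBot.add_lt_add_right (by simpa using hh.ne_zero) hv
  rw [hg.degree_mul, hg.degree_mul] at hug
  exact (add_le_add_left hhu _).not_gt hug

theorem map_eq_zero_iff_C_dvd (hker : RingHom.ker φ = Ideal.span {ϖ}) {p : R[X]} :
    p.map φ = 0 ↔ C ϖ ∣ p := by
  simp only [C_dvd_iff_dvd_coeff, Polynomial.ext_iff, coeff_map, coeff_zero, ← RingHom.mem_ker,
    hker, Ideal.mem_span_singleton]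

theorem map_eq_map_of_C_dvd_sub (hker : RingHom.ker φ = Ideal.span {ϖ}) {p p' : R[X]}
    (h : C ϖ ∣ p - p') : p.map φ = p'.map φ := by
  rw [← sub_eq_zero, ← Polynomial.map_sub, map_eq_zero_iff_C_dvd hker]
  exact h

structure IsApproxFactorization (φ : R →+* S) (ϖ : R) (f : R[X]) (g₀ h₀ : S[X]) (k : ℕ)
    (G H : R[X]) : Prop where
  monic_left : G.Monic
  monic_right : H.Monic
  map_left : G.map φ = g₀
  map_right : H.map φ = h₀
  C_pow_dvd_sub_mul : C (ϖ ^ k) ∣ f - G * H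

variable {f : R[X]} {g₀ h₀ : S[X]}

theorem IsApproxFactorization.mono {k l : ℕ} {G H : R[X]}
    (h : IsApproxFactorization φ ϖ f g₀ h₀ l G H) (hkl : k ≤ l) :
    IsApproxFactorization φ ϖ f g₀ h₀ k G H :=
  { h with C_pow_dvd_sub_mul := (_root_.map_dvd C (pow_dvd_pow ϖ hkl)).trans h.C_pow_dvd_sub_mul }

theorem exists_isApproxFactorization_one [Nontrivial S] (hφ : Function.Surjective φ)
    (hker : RingHom.ker φ = Ideal.span {ϖ}) (hg₀ : g₀.Monic) (hh₀ : h₀.Monic)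
    (hfact : f.map φ = g₀ * h₀) : ∃ G H, IsApproxFactorization φ ϖ f g₀ h₀ 1 G H := by
  obtain ⟨G, hG, -, hGm⟩ := lifts_and_degree_eq_and_monic
    ((mem_lifts g₀).mpr (map_surjective φ hφ g₀)) hg₀
  obtain ⟨H, hH, -, hHm⟩ := lifts_and_degree_eq_and_monic
    ((mem_lifts h₀).mpr (map_surjective φ hφ h₀)) hh₀
  refine ⟨G, H, hGm, hHm, hG, hH, ?_⟩
  rw [pow_one, ← map_eq_zero_iff_C_dvd hker, Polynomial.map_sub, Polynomial.map_mul, hG, hH,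
    hfact, sub_self]

theorem IsApproxFactorization.exists_succ [Nontrivial S] (hφ : Function.Surjective φ)
    (hker : RingHom.ker φ = Ideal.span {ϖ}) (hf : f.Monic) (hcop : IsCoprime g₀ h₀) {k : ℕ}
    (hk : k ≠ 0) {G H : R[X]} (hGH : IsApproxFactorization φ ϖ f g₀ h₀ k G H) :
    ∃ G' H', IsApproxFactorization φ ϖ f g₀ h₀ (k + 1) G' H' ∧
      C (ϖ ^ k) ∣ G' - G ∧ C (ϖ ^ k) ∣ H' - H := by
  have := φ.domain_nontrivial
  obtain ⟨hG, hH, rfl, rfl, hdvd⟩ := hGH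
  set c := C (ϖ ^ k)
  have hc : c.map φ = 0 := by
    rw [map_eq_zero_iff_C_dvd hker]
    exact _root_.map_dvd C (dvd_pow_self ϖ hk)
  have hGHm := hG.mul hH
  have hdeg : f.degree = (G * H).degree := by
    rw [← hf.degree_map φ, ← hGHm.degree_map φ,
      map_eq_map_of_C_dvd_sub hker ((_root_.map_dvd C (dvd_pow_self ϖ hk)).trans hdvd)]
  obtain ⟨E, hE, hEdeg⟩ := exists_eq_C_mul_of_degree_lt hGHm
    ((degree_sub_lt_left hdeg hf.ne_zero (by rw [hf.leadingCoeff, hGHm.leadingCoeff])).trans_eq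
      hdeg) hdvd
  obtain ⟨u, v, huv, hu, hv⟩ := exists_mul_add_mul_eq_of_isCoprime (hG.map φ) (hH.map φ) hcop
    (e := E.map φ) (by
      rw [← Polynomial.map_mul, hGHm.degree_map]
      exact degree_map_le.trans_lt hEdeg)
  obtain ⟨U, rfl, hUu⟩ := exists_degree_eq_of_mem_lifts ((mem_lifts u).mpr (map_surjective φ hφ u))
  obtain ⟨V, rfl, hVv⟩ := exists_degree_eq_of_mem_lifts ((mem_lifts v).mpr (map_surjective φ hφ v))
  obtain ⟨W, hW⟩ : C ϖ ∣ E - (U * G + V * H) := by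
    rw [← map_eq_zero_iff_C_dvd hker, Polynomial.map_sub, ← huv]
    simp
  refine ⟨G + c * V, H + c * U, ⟨?_, ?_, ?_, ?_, ?_⟩, ⟨V, by ring⟩, ⟨U, by ring⟩⟩
  · exact hG.add_C_mul_of_degree_lt (by rwa [hVv, ← hG.degree_map φ]) _
  · exact hH.add_C_mul_of_degree_lt (by rwa [hUu, ← hH.degree_map φ]) _
  · simp [hc]
  · simp [hc]
  · have hsq : C (ϖ ^ (k + 1)) ∣ c * c := by
      rw [← C_mul, ← pow_add]
      exact _root_.map_dvd C (pow_dvd_pow ϖ (by omega))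
    have : f - (G + c * V) * (H + c * U) = C (ϖ ^ (k + 1)) * W - c * c * (V * U) := by
      rw [pow_succ, C_mul]
      linear_combination hE + c * hW
    rw [this]
    exact dvd_sub (dvd_mul_right _ _) (hsq.mul_right _)

theorem exists_seq_isApproxFactorization [Nontrivial S] (hφ : Function.Surjective φ)
    (hker : RingHom.ker φ = Ideal.span {ϖ}) (hf : f.Monic) (hg₀ : g₀.Monic) (hh₀ : h₀.Monic)
    (hcop : IsCoprime g₀ h₀) (hfact : f.map φ = g₀ * h₀) :
    ∃ G H : ℕ → R[X], ∀ k, IsApproxFactorization φ ϖ f g₀ h₀ (k + 1) (G k) (H k) ∧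
      C (ϖ ^ k) ∣ G (k + 1) - G k ∧ C (ϖ ^ k) ∣ H (k + 1) - H k := by
  obtain ⟨s, hs⟩ := exists_seq_of_exists_succ
    (P := fun k (p : R[X] × R[X]) ↦ IsApproxFactorization φ ϖ f g₀ h₀ (k + 1) p.1 p.2)
    (Q := fun k p p' ↦ C (ϖ ^ k) ∣ p'.1 - p.1 ∧ C (ϖ ^ k) ∣ p'.2 - p.2)
    (by
      obtain ⟨G, H, h⟩ := exists_isApproxFactorization_one hφ hker hg₀ hh₀ hfact
      exact ⟨(G, H), h⟩)
    (fun k p hp ↦ by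
      obtain ⟨G, H, h, hG, hH⟩ := hp.exists_succ hφ hker hf hcop k.succ_ne_zero
      have hk : C (ϖ ^ k) ∣ C (ϖ ^ (k + 1)) := _root_.map_dvd C (pow_dvd_pow ϖ k.le_succ)
      exact ⟨(G, H), h, hk.trans hG, hk.trans hH⟩)
  exact ⟨fun k ↦ (s k).1, fun k ↦ (s k).2, hs⟩

theorem exists_monic_lifts_of_map_eq_mul [IsAdicComplete (Ideal.span {ϖ}) R] [Nontrivial S]
    (hφ : Function.Surjective φ) (hker : RingHom.ker φ = Ideal.span {ϖ}) (hf : f.Monic)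
    (hg₀ : g₀.Monic) (hh₀ : h₀.Monic) (hcop : IsCoprime g₀ h₀) (hfact : f.map φ = g₀ * h₀) :
    ∃ g h : R[X], g.Monic ∧ h.Monic ∧ g.map φ = g₀ ∧ h.map φ = h₀ ∧ f = g * h := by
  obtain ⟨G, H, hs⟩ := exists_seq_isApproxFactorization hφ hker hf hg₀ hh₀ hcop hfact
  obtain ⟨g, hg, hgG⟩ := exists_monic_forall_C_pow_dvd_sub (fun k ↦ (hs k).1.monic_left)
    (fun k ↦ by rw [← (hs k).1.monic_left.natDegree_map φ, (hs k).1.map_left]) fun k ↦ (hs k).2.1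
  obtain ⟨h, hh, hhH⟩ := exists_monic_forall_C_pow_dvd_sub (fun k ↦ (hs k).1.monic_right)
    (fun k ↦ by rw [← (hs k).1.monic_right.natDegree_map φ, (hs k).1.map_right]) fun k ↦ (hs k).2.2
  refine ⟨g, h, hg, hh, ?_, ?_, eq_of_forall_C_pow_dvd_sub (ϖ := ϖ) fun k ↦ ?_⟩
  · rw [map_eq_map_of_C_dvd_sub hker (by simpa using hgG 1), (hs 1).1.map_left]
  · rw [map_eq_map_of_C_dvd_sub hker (by simpa using hhH 1), (hs 1).1.map_right]
  · have hfGH := ((hs k).1.mono k.le_succ).C_pow_dvd_sub_mul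
    rw [show f - g * h = (f - G k * H k) - (g - G k) * H k - g * (h - H k) by ring]
    exact dvd_sub (dvd_sub hfGH ((hgG k).mul_right _)) ((hhH k).mul_left _)

end Polynomial

/-- Hensel's Lemma over the `q`-adic integers: if the reduction mod `q` of a monic
polynomial `f` over `ℤ_q` factorizes into coprime monic polynomials `g₀·h₀` over `𝔽_q`,
then `f = g·h` for monic polynomials `g, h` over `ℤ_q` reducing to `g₀, h₀`. -/
theorem hensel_lift_coprime_factorization
    (q : ℕ) [hq : Fact q.Prime]
    (f : Polynomial (PadicInt q)) (hf : f.Monic)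
    (g₀ h₀ : Polynomial (ZMod q)) (hg₀ : g₀.Monic) (hh₀ : h₀.Monic)
    (hcop : IsCoprime g₀ h₀)
    (hfact : f.map (PadicInt.toZMod) = g₀ * h₀) :
    ∃ g h : Polynomial (PadicInt q), g.Monic ∧ h.Monic ∧
      g.map (PadicInt.toZMod) = g₀ ∧ h.map (PadicInt.toZMod) = h₀ ∧ f = g * h := by
  have hker : RingHom.ker (PadicInt.toZMod (p := q)) = Ideal.span {(q : ℤ_[q])} := by
    rw [PadicInt.ker_toZMod, PadicInt.maximalIdeal_eq_span_p]
  have : IsAdicComplete (Ideal.span {(q : ℤ_[q])}) ℤ_[q] :=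
    PadicInt.maximalIdeal_eq_span_p (p := q) ▸ inferInstance
  exact exists_monic_lifts_of_map_eq_mul (ZMod.ringHom_surjective _) hker hf hg₀ hh₀ hcop hfact
end

section
/- Let G be a finite group, F a field, n ≥ 1, and let ρ : G → GL(n,F) be a faithful irreducible representation. Let N be the normalizer and C the centralizer of the image ρ(G) in GL(n,F). Then the quotient group N/C is isomorphic to the subgroup of Aut(G) consisting of those automorphisms θ for which ρ∘θ is equivalent to ρ, i.e., for which there exists x ∈ GL(n,F) with ρ(θ(g)) = x·ρ(g)·x⁻¹ for all g ∈ G. -/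
/-! A faithful `ρ` identifies `G` with `ρ(G)`, so the conjugation action of the normalizer
`N` on `ρ(G)` becomes a homomorphism `N →* Aut(G)` with kernel the centralizer `C`.
Conversely, if `x` conjugates `ρ` into `ρ ∘ θ`, then `x` maps `ρ(G)` onto `ρ(θ(G)) = ρ(G)`,
so `x ∈ N` and `θ` is its image. -/

namespace MonoidHom

open Subgroup

variable {G K : Type*} [Group G] [Group K] {ρ : G →* K} (hρ : Function.Injective ρ)

noncomputable def normalizerRangeToMulAut : normalizer (ρ.range : Set K) →* MulAut G :=
  (MulAut.congr (ρ.ofInjective hρ)).symm.toMonoidHom.comp ρ.range.normalizerMonoidHom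

theorem map_normalizerRangeToMulAut_apply (y : normalizer (ρ.range : Set K)) (g : G) :
    ρ (normalizerRangeToMulAut hρ y g) = y * ρ g * (y : K)⁻¹ := by
  change ρ ((ρ.ofInjective hρ).symm (ρ.range.normalizerMonoidHom y (ρ.ofInjective hρ g))) = _
  rw [apply_ofInjective_symm]
  rfl

theorem normalizerRangeToMulAut_eq_iff (y : normalizer (ρ.range : Set K)) (θ : MulAut G) :
    normalizerRangeToMulAut hρ y = θ ↔ ∀ g, ρ (θ g) = y * ρ g * (y : K)⁻¹ := by
  simp only [MulEquiv.ext_iff, ← hρ.eq_iff, map_normalizerRangeToMulAut_apply, eq_comm]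

theorem mem_normalizer_range_of_conj {θ : MulAut G} {x : K}
    (hx : ∀ g, ρ (θ g) = x * ρ g * x⁻¹) : x ∈ normalizer (ρ.range : Set K) := by
  refine mem_normalizer_iff.mpr fun a => ⟨?_, ?_⟩
  · rintro ⟨g, rfl⟩
    exact ⟨θ g, hx g⟩
  · rintro ⟨g, hg⟩
    refine ⟨θ⁻¹ g, (MulAut.conj x).injective ?_⟩
    simpa [← hx] using hg

theorem mem_range_normalizerRangeToMulAut_iff (θ : MulAut G) :
    θ ∈ (normalizerRangeToMulAut hρ).range ↔ ∃ x : K, ∀ g, ρ (θ g) = x * ρ g * x⁻¹ := by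
  constructor
  · rintro ⟨y, hy⟩
    exact ⟨y, (normalizerRangeToMulAut_eq_iff hρ y θ).mp hy⟩
  · rintro ⟨x, hx⟩
    exact ⟨⟨x, mem_normalizer_range_of_conj hx⟩, (normalizerRangeToMulAut_eq_iff hρ _ θ).mpr hx⟩

theorem mem_ker_normalizerRangeToMulAut_iff (y : normalizer (ρ.range : Set K)) :
    y ∈ (normalizerRangeToMulAut hρ).ker ↔ (y : K) ∈ centralizer (ρ.range : Set K) := by
  rw [normalizerRangeToMulAut, ker_comp_of_injective _ _ (MulEquiv.injective _),
    normalizerMonoidHom_ker, mem_subgroupOf]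

end MonoidHom

theorem normalizer_mod_centralizer_iso_stabilizer_of_equivalence_class_general
    {G : Type*} [Group G] {n : ℕ} {F : Type*} [Field F]
    (ρ : G →* Matrix.GeneralLinearGroup (Fin n) F)
    (hfaith : Function.Injective ρ) :
    ∃ f : (Subgroup.normalizer (ρ.range : Set (Matrix.GeneralLinearGroup (Fin n) F))) →* MulAut G,
      (∀ θ : MulAut G, θ ∈ f.range ↔
        ∃ x : Matrix.GeneralLinearGroup (Fin n) F, ∀ g : G, ρ (θ g) = x * ρ g * x⁻¹) ∧
      (∀ y : Subgroup.normalizer (ρ.range : Set (Matrix.GeneralLinearGroup (Fin n) F)), y ∈ f.ker ↔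
        (y : Matrix.GeneralLinearGroup (Fin n) F) ∈
          Subgroup.centralizer (ρ.range : Set (Matrix.GeneralLinearGroup (Fin n) F))) :=
  ⟨ρ.normalizerRangeToMulAut hfaith, ρ.mem_range_normalizerRangeToMulAut_iff hfaith,
    ρ.mem_ker_normalizerRangeToMulAut_iff hfaith⟩

/-- Let `ρ : G → GL(n,F)` be a faithful irreducible representation of a finite group `G`,
`N` the normalizer and `C` the centralizer of `ρ(G)` in `GL(n,F)`.  Then `N/C` is
isomorphic to the subgroup of `Aut(G)` of automorphisms `θ` with `ρ∘θ` equivalent to `ρ`: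
there is a homomorphism from `N` to `Aut(G)` whose image is that subgroup and whose
kernel is `C`. -/
theorem normalizer_mod_centralizer_iso_stabilizer_of_equivalence_class
    {G : Type*} [Group G] [Finite G] {n : ℕ} {F : Type*} [Field F]
    (ρ : G →* Matrix.GeneralLinearGroup (Fin n) F)
    (hfaith : Function.Injective ρ)
    (hirr : ∀ W : Submodule F (Fin n → F),
      (∀ g : G, ∀ v ∈ W, Matrix.mulVec ((ρ g : Matrix (Fin n) (Fin n) F)) v ∈ W) →
      W = ⊥ ∨ W = ⊤) :
    ∃ f : (Subgroup.normalizer (ρ.range : Set (Matrix.GeneralLinearGroup (Fin n) F))) →* MulAut G,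
      (∀ θ : MulAut G, θ ∈ f.range ↔
        ∃ x : Matrix.GeneralLinearGroup (Fin n) F, ∀ g : G, ρ (θ g) = x * ρ g * x⁻¹) ∧
      (∀ y : Subgroup.normalizer (ρ.range : Set (Matrix.GeneralLinearGroup (Fin n) F)), y ∈ f.ker ↔
        (y : Matrix.GeneralLinearGroup (Fin n) F) ∈
          Subgroup.centralizer (ρ.range : Set (Matrix.GeneralLinearGroup (Fin n) F))) :=
  normalizer_mod_centralizer_iso_stabilizer_of_equivalence_class_general ρ hfaith
end
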